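/- arXiv:1504.07292 — 10 statements merged into one kernel-verified Lean document; each statement's English description precedes it below -/
import Mathlib

section
/- For any z outside K having a nearest point p(z) in K, there exists a norm-one functional f that attains its norm at z − p(z) (i.e. f(z−p(z)) = ‖z−p(z)‖ and ‖f‖ = 1) and belongs to the Clarke generalized subdifferential of the distance function d_K at z. -/
open Filter Topology Metric NNReal

noncomputable section

variable {X : Type*}

/-- The distance function generated by a set `K`. -/
def dK [NormedAddCommGroup X] (K : Set X) (x : X) : ℝ := Metric.infDist x K

/-- The set of nearest points (metric projection) of `z` in `K`. -/
def nearPts [NormedAddCommGroup X] (K : Set X) (z : X) : Set X :=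
  {p | p ∈ K ∧ ‖z - p‖ = Metric.infDist z K}

/-- The Clarke generalized directional derivative of `h` at `x` in direction `y`. -/
def clarkeDeriv [NormedAddCommGroup X] [NormedSpace ℝ X] (h : X → ℝ) (x y : X) : ℝ :=
  Filter.limsup (fun p : X × ℝ => (h (p.1 + p.2 • y) - h p.1) / p.2)
    ((𝓝 x) ×ˢ (𝓝[>] (0 : ℝ)))

/-- The Clarke generalized subdifferential of `h` at `x`. -/
def clarkeSubdiff [NormedAddCommGroup X] [NormedSpace ℝ X] (h : X → ℝ) (x : X) :
    Set (X →L[ℝ] ℝ) :=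
  {f | ∀ y : X, f y ≤ clarkeDeriv h x y}

/-- `h` has Gâteaux derivative `f` at `x`. -/
def HasGDeriv [NormedAddCommGroup X] [NormedSpace ℝ X] (h : X → ℝ) (f : X →L[ℝ] ℝ)
    (x : X) : Prop :=
  ∀ y : X, Tendsto (fun t : ℝ => (h (x + t • y) - h x) / t) (𝓝[≠] (0 : ℝ)) (𝓝 (f y))

/-- The subdifferential of the norm at `v`: norm-one functionals attaining the norm at `v`. -/
def normSubdiff [NormedAddCommGroup X] [NormedSpace ℝ X] (v : X) : Set (X →L[ℝ] ℝ) :=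
  {f | ‖f‖ = 1 ∧ f v = ‖v‖}

/-- The norm of `X` is Gâteaux differentiable off `0`. -/
def GateauxSmoothNorm (X : Type*) [NormedAddCommGroup X] [NormedSpace ℝ X] : Prop :=
  ∀ x : X, x ≠ 0 → ∃ f : X →L[ℝ] ℝ, HasGDeriv (fun v : X => ‖v‖) f x

/-- The norm of `X` is Fréchet differentiable off `0`. -/
def FrechetSmoothNorm (X : Type*) [NormedAddCommGroup X] [NormedSpace ℝ X] : Prop :=
  ∀ x : X, x ≠ 0 → ∃ f : X →L[ℝ] ℝ, HasFDerivAt (fun v : X => ‖v‖) f x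

/-- The norm of `X` is locally uniformly rotund (LUR). -/
def LURNorm (X : Type*) [NormedAddCommGroup X] : Prop :=
  ∀ x : X, ‖x‖ = 1 → ∀ u : ℕ → X, (∀ n, ‖u n‖ = 1) →
    Tendsto (fun n => ‖u n + x‖) atTop (𝓝 (2 : ℝ)) → Tendsto u atTop (𝓝 x)

/-- `E(K)`: points outside `K` having a nearest point in `K`. -/
def ESet [NormedAddCommGroup X] (K : Set X) : Set X :=
  {z | z ∉ K ∧ (nearPts K z).Nonempty}

/-- `E'(K)`: points outside `K` all of whose minimizing sequences in `K` converge to a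
unique nearest point. -/
def EPrime [NormedAddCommGroup X] (K : Set X) : Set X :=
  {z | z ∉ K ∧ ∃ p ∈ K, ‖z - p‖ = Metric.infDist z K ∧
    ∀ k : ℕ → X, (∀ n, k n ∈ K) →
      Tendsto (fun n => ‖z - k n‖) atTop (𝓝 (Metric.infDist z K)) →
      Tendsto k atTop (𝓝 p)}

/-- `K` is a sun at `x` with nearest point `p`. -/
def IsSunAt [NormedAddCommGroup X] [NormedSpace ℝ X] (K : Set X) (x p : X) : Prop :=
  p ∈ nearPts K x ∧ ∀ t : ℝ, 0 ≤ t → p ∈ nearPts K (x + (t / ‖x - p‖) • (x - p))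

/-- `K` is an almost sun: the sun property holds on a dense subset of `X ∖ K`. -/
def AlmostSun [NormedAddCommGroup X] [NormedSpace ℝ X] (K : Set X) : Prop :=
  ∀ x : X, x ∉ K → x ∈ closure {z | z ∉ K ∧ ∃ p, IsSunAt K z p}

/-- `K` is a sun. -/
def IsSun [NormedAddCommGroup X] [NormedSpace ℝ X] (K : Set X) : Prop :=
  ∀ x : X, x ∉ K → ∃ p, IsSunAt K x p

/-- `K` is almost proximinal: nearest points exist on a dense subset of `X ∖ K`. -/
def AlmostProximinal [NormedAddCommGroup X] (K : Set X) : Prop :=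
  ∀ x : X, x ∉ K → x ∈ closure (ESet K)

/-- `K` is proximinal: every point outside `K` has a nearest point in `K`. -/
def Proximinal [NormedAddCommGroup X] (K : Set X) : Prop :=
  ∀ x : X, x ∉ K → (nearPts K x).Nonempty

/-- `K` is Chebyshev: every point outside `K` has a unique nearest point in `K`. -/
def Chebyshev [NormedAddCommGroup X] (K : Set X) : Prop :=
  ∀ x : X, x ∉ K → ∃! p, p ∈ nearPts K x

/-- The set `E_r(K)`. -/
def Er [NormedAddCommGroup X] [NormedSpace ℝ X] (K : Set X) (r : ℝ) : Set X :=
  {x | ∃ x₀ p : X, p ∈ nearPts K x₀ ∧ r < Metric.infDist x₀ K ∧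
    x = x₀ - (r / ‖x₀ - p‖) • (x₀ - p)}

/-- `h` is uniformly Gâteaux differentiable on `D` with derivative map `g`. -/
def UniformGateauxOn [NormedAddCommGroup X] [NormedSpace ℝ X]
    (h : X → ℝ) (g : X → X →L[ℝ] ℝ) (D : Set X) : Prop :=
  ∀ ε > (0 : ℝ), ∀ y : X, ‖y‖ = 1 → ∃ δ > (0 : ℝ), ∀ x ∈ D, ∀ t : ℝ,
    t ≠ 0 → |t| < δ → |(h (x + t • y) - h x) / t - g x y| < ε

/-- `h` is uniformly Fréchet differentiable on `D` with derivative map `g`. -/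
def UniformFrechetOn [NormedAddCommGroup X] [NormedSpace ℝ X]
    (h : X → ℝ) (g : X → X →L[ℝ] ℝ) (D : Set X) : Prop :=
  ∀ ε > (0 : ℝ), ∃ δ > (0 : ℝ), ∀ x ∈ D, ∀ y : X, ‖y‖ = 1 → ∀ t : ℝ,
    t ≠ 0 → |t| < δ → |(h (x + t • y) - h x) / t - g x y| < ε

/-- The norm of `X` is uniformly Gâteaux smooth (on the unit sphere). -/
def UniformGateauxSmoothNorm (X : Type*) [NormedAddCommGroup X] [NormedSpace ℝ X] : Prop :=
  ∃ g : X → X →L[ℝ] ℝ, UniformGateauxOn (fun v : X => ‖v‖) g {x : X | ‖x‖ = 1}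

/-- The norm of `X` is uniformly Fréchet smooth (on the unit sphere). -/
def UniformFrechetSmoothNorm (X : Type*) [NormedAddCommGroup X] [NormedSpace ℝ X] : Prop :=
  ∃ g : X → X →L[ℝ] ℝ, UniformFrechetOn (fun v : X => ‖v‖) g {x : X | ‖x‖ = 1}


/-!
The Clarke derivative `y ↦ d_K°(z; y)` of the `1`-Lipschitz function `d_K` is sublinear and
bounded by `‖y‖`, so by Hahn–Banach it dominates a functional `f` of norm at most `1` with
`f (z - p) = d_K°(z; z - p)`. Approaching `z` along the segment from `p`, `d_K` grows at unit
rate, hence `d_K°(z; z - p) = ‖z - p‖`, and this forces `‖f‖ = 1`.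
-/

namespace Filter

variable {α β : Type*} {F : Filter α} {u : α → ℝ} {M : ℝ}

theorem isBoundedUnder_le_of_eventually_abs_le (hu : ∀ᶠ a in F, |u a| ≤ M) :
    IsBoundedUnder (· ≤ ·) F u :=
  isBoundedUnder_of_eventually_le (hu.mono fun _ h => (abs_le.1 h).2)

theorem isBoundedUnder_ge_of_eventually_abs_le (hu : ∀ᶠ a in F, |u a| ≤ M) :
    IsBoundedUnder (· ≥ ·) F u :=
  isBoundedUnder_of_eventually_ge (hu.mono fun _ h => (abs_le.1 h).1)

theorem isCoboundedUnder_le_of_eventually_abs_le [F.NeBot] (hu : ∀ᶠ a in F, |u a| ≤ M) :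
    IsCoboundedUnder (· ≤ ·) F u :=
  (isBoundedUnder_ge_of_eventually_abs_le hu).isCoboundedUnder_le

theorem limsup_comp_le_of_tendsto {G : Filter β} [G.NeBot] (hu : ∀ᶠ a in F, |u a| ≤ M)
    {φ : β → α} (hφ : Tendsto φ G F) : limsup (u ∘ φ) G ≤ limsup u F := by
  rw [limsup_comp]
  exact limsup_le_limsup_of_le hφ (isCoboundedUnder_le_of_eventually_abs_le (hφ hu))
    (isBoundedUnder_le_of_eventually_abs_le hu)

end Filter

theorem tendsto_const_mul_nhdsGT_zero {c : ℝ} (hc : 0 < c) :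
    Tendsto (c * ·) (𝓝[>] (0 : ℝ)) (𝓝[>] 0) :=
  tendsto_nhdsWithin_iff.2
    ⟨by simpa using ((continuous_const_mul c).tendsto 0).mono_left nhdsWithin_le_nhds,
      eventually_mem_nhdsWithin.mono fun _ ht => mul_pos hc ht⟩

/-- Hahn–Banach, extending `c • v ↦ c * N v` from the line `ℝ ∙ v`. -/
theorem exists_continuousLinearMap_le_sublinear_apply_eq [NormedAddCommGroup X]
    [NormedSpace ℝ X] {N : X → ℝ} (N_hom : ∀ c : ℝ, 0 < c → ∀ y, N (c • y) = c * N y)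
    (N_add : ∀ y w, N (y + w) ≤ N y + N w) {C : ℝ≥0} (N_le : ∀ y, N y ≤ C * ‖y‖) (v : X) :
    ∃ f : X →L[ℝ] ℝ, ‖f‖ ≤ C ∧ (∀ y, f y ≤ N y) ∧ f v = N v := by
  have N_zero : N 0 = 0 := by
    have := N_hom 2 two_pos 0
    rw [smul_zero] at this
    linarith
  have le_on_line : ∀ c : ℝ, c * N v ≤ N (c • v) := by
    intro c
    rcases lt_trichotomy c 0 with hc | rfl | hc
    · have h_neg : 0 ≤ N v + N (-v) := by simpa [N_zero] using N_add v (-v)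
      rw [show c • v = (-c) • -v by simp, N_hom (-c) (neg_pos.2 hc)]
      nlinarith
    · simp [N_zero]
    · rw [N_hom c hc]
  let f₀ : X →ₗ.[ℝ] ℝ := LinearPMap.mkSpanSingleton' v (N v) fun c hcv => by
    rcases smul_eq_zero.1 hcv with rfl | rfl
    · simp
    · simp [N_zero]
  obtain ⟨g, hg_ext, hg_le⟩ := exists_extension_of_le_sublinear f₀ N N_hom N_add <| by
    rintro ⟨_, hy⟩
    obtain ⟨c, rfl⟩ := Submodule.mem_span_singleton.1 hy
    rw [LinearPMap.mkSpanSingleton'_apply, RingHom.id_apply, smul_eq_mul]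
    exact le_on_line c
  have hg_bound : ∀ y, ‖g y‖ ≤ C * ‖y‖ := fun y => by
    have hg_neg := (hg_le (-y)).trans (N_le (-y))
    rw [map_neg, norm_neg] at hg_neg
    rw [Real.norm_eq_abs, abs_le]
    exact ⟨by linarith, (hg_le y).trans (N_le y)⟩
  refine ⟨g.mkContinuous C hg_bound, g.mkContinuous_norm_le C.2 hg_bound, hg_le, ?_⟩
  exact (hg_ext ⟨v, Submodule.mem_span_singleton_self v⟩).trans
    (LinearPMap.mkSpanSingleton'_apply_self _ _ _ _)

section ClarkeDerivative

variable [NormedAddCommGroup X] [NormedSpace ℝ X] {h : X → ℝ} {L : ℝ≥0}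

def clarkeQuot (h : X → ℝ) (y : X) (q : X × ℝ) : ℝ :=
  (h (q.1 + q.2 • y) - h q.1) / q.2

theorem clarkeDeriv_eq_limsup (h : X → ℝ) (x y : X) :
    clarkeDeriv h x y = limsup (clarkeQuot h y) (𝓝 x ×ˢ 𝓝[>] 0) :=
  rfl

theorem clarkeQuot_add (h : X → ℝ) (y w : X) (q : X × ℝ) :
    clarkeQuot h (y + w) q = clarkeQuot h w (q.1 + q.2 • y, q.2) + clarkeQuot h y q := by
  simp only [clarkeQuot, smul_add, ← add_assoc, ← add_div, sub_add_sub_cancel]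

theorem clarkeQuot_smul (h : X → ℝ) {c : ℝ} (hc : c ≠ 0) (y : X) (q : X × ℝ) :
    clarkeQuot h (c • y) q = c * clarkeQuot h y (q.1, c * q.2) := by
  simp only [clarkeQuot, smul_smul, mul_comm q.2 c, ← mul_div_assoc, mul_div_mul_left _ _ hc]

theorem LipschitzWith.abs_clarkeQuot_le (hh : LipschitzWith L h) (x y : X) {t : ℝ}
    (ht : 0 < t) : |clarkeQuot h y (x, t)| ≤ L * ‖y‖ := by
  rw [clarkeQuot, abs_div, abs_of_pos ht, div_le_iff₀ ht]
  calc |h (x + t • y) - h x| ≤ L * dist (x + t • y) x := hh.dist_le_mul _ _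
    _ = L * ‖y‖ * t := by
      rw [dist_eq_norm, add_sub_cancel_left, norm_smul, Real.norm_eq_abs, abs_of_pos ht]; ring

theorem LipschitzWith.eventually_abs_clarkeQuot_le (hh : LipschitzWith L h) (x y : X) :
    ∀ᶠ q in 𝓝 x ×ˢ 𝓝[>] (0 : ℝ), |clarkeQuot h y q| ≤ L * ‖y‖ :=
  (Eventually.prod_inr self_mem_nhdsWithin _).mono fun q hq => hh.abs_clarkeQuot_le q.1 y hq

theorem LipschitzWith.clarkeDeriv_le (hh : LipschitzWith L h) (x y : X) :
    clarkeDeriv h x y ≤ L * ‖y‖ :=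
  have hb := hh.eventually_abs_clarkeQuot_le x y
  limsup_le_of_le (isCoboundedUnder_le_of_eventually_abs_le hb) (hb.mono fun _ h => (abs_le.1 h).2)

theorem LipschitzWith.clarkeDeriv_add_le (hh : LipschitzWith L h) (x y w : X) :
    clarkeDeriv h x (y + w) ≤ clarkeDeriv h x y + clarkeDeriv h x w := by
  let φ : X × ℝ → X × ℝ := fun q => (q.1 + q.2 • y, q.2)
  have hφ : Tendsto φ (𝓝 x ×ˢ 𝓝[>] 0) (𝓝 x ×ˢ 𝓝[>] 0) := by
    refine Tendsto.prodMk ?_ tendsto_snd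
    have ht : Tendsto (fun q : X × ℝ => q.2) (𝓝 x ×ˢ 𝓝[>] 0) (𝓝 0) :=
      tendsto_snd.mono_right nhdsWithin_le_nhds
    simpa using tendsto_fst.add (ht.smul_const y)
  have hy := hh.eventually_abs_clarkeQuot_le x y
  have hw := hφ.eventually (hh.eventually_abs_clarkeQuot_le x w)
  have hsplit : clarkeQuot h (y + w) = clarkeQuot h w ∘ φ + clarkeQuot h y :=
    funext (clarkeQuot_add h y w)
  rw [clarkeDeriv_eq_limsup, hsplit, add_comm (clarkeDeriv h x y)]
  calc limsup (clarkeQuot h w ∘ φ + clarkeQuot h y) _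
      ≤ limsup (clarkeQuot h w ∘ φ) _ + limsup (clarkeQuot h y) _ :=
        limsup_add_le (isBoundedUnder_ge_of_eventually_abs_le hw)
          (isBoundedUnder_le_of_eventually_abs_le hw)
          (isCoboundedUnder_le_of_eventually_abs_le hy) (isBoundedUnder_le_of_eventually_abs_le hy)
    _ ≤ clarkeDeriv h x w + clarkeDeriv h x y :=
        add_le_add_left (limsup_comp_le_of_tendsto (hh.eventually_abs_clarkeQuot_le x w) hφ) _

theorem LipschitzWith.clarkeDeriv_smul_le (hh : LipschitzWith L h) (x y : X) {c : ℝ}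
    (hc : 0 < c) : clarkeDeriv h x (c • y) ≤ c * clarkeDeriv h x y := by
  let ψ : X × ℝ → X × ℝ := fun q => (q.1, c * q.2)
  have hψ : Tendsto ψ (𝓝 x ×ˢ 𝓝[>] 0) (𝓝 x ×ˢ 𝓝[>] 0) :=
    tendsto_fst.prodMk ((tendsto_const_mul_nhdsGT_zero hc).comp tendsto_snd)
  have hb := hψ.eventually (hh.eventually_abs_clarkeQuot_le x y)
  have hscale : clarkeQuot h (c • y) = (c * ·) ∘ (clarkeQuot h y ∘ ψ) :=
    funext (clarkeQuot_smul h hc.ne' y)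
  rw [clarkeDeriv_eq_limsup, hscale, ← Monotone.map_limsup_of_continuousAt (f := (c * ·))
    (a := clarkeQuot h y ∘ ψ) (monotone_mul_left_of_nonneg hc.le)
    (continuous_const_mul c).continuousAt (isBoundedUnder_le_of_eventually_abs_le hb)
    (isCoboundedUnder_le_of_eventually_abs_le hb)]
  exact mul_le_mul_of_nonneg_left
    (limsup_comp_le_of_tendsto (hh.eventually_abs_clarkeQuot_le x y) hψ) hc.le

theorem LipschitzWith.clarkeDeriv_smul (hh : LipschitzWith L h) (x y : X) {c : ℝ}
    (hc : 0 < c) : clarkeDeriv h x (c • y) = c * clarkeDeriv h x y := by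
  refine le_antisymm (hh.clarkeDeriv_smul_le x y hc) ?_
  have h_inv := hh.clarkeDeriv_smul_le x (c • y) (inv_pos.2 hc)
  rwa [inv_smul_smul₀ hc.ne', le_inv_mul_iff₀ hc] at h_inv

theorem LipschitzWith.exists_mem_clarkeSubdiff_apply_eq (hh : LipschitzWith L h) (x v : X) :
    ∃ f ∈ clarkeSubdiff h x, ‖f‖ ≤ L ∧ f v = clarkeDeriv h x v := by
  obtain ⟨f, hf_norm, hf_le, hf_v⟩ := exists_continuousLinearMap_le_sublinear_apply_eq
    (fun c hc y => hh.clarkeDeriv_smul x y hc) (hh.clarkeDeriv_add_le x) (hh.clarkeDeriv_le x) v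
  exact ⟨f, hf_le, hf_norm, hf_v⟩

end ClarkeDerivative

theorem lipschitzWith_dK [NormedAddCommGroup X] (K : Set X) : LipschitzWith 1 (dK K) :=
  lipschitz_infDist_pt K

/-- Moving from `z - s • (z - p)` to `z` raises `dK K` by at least `s * ‖z - p‖`, since the
starting point is within `(1 - s) * ‖z - p‖` of `p`. -/
theorem clarkeDeriv_dK_sub_eq_norm_of_mem_nearPts [NormedAddCommGroup X] [NormedSpace ℝ X] {K : Set X}
    {z p : X} (hp : p ∈ nearPts K z) : clarkeDeriv (dK K) z (z - p) = ‖z - p‖ := by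
  refine le_antisymm (by simpa using (lipschitzWith_dK K).clarkeDeriv_le z (z - p)) ?_
  let φ : ℝ → X × ℝ := fun s => (z - s • (z - p), s)
  have hφ : Tendsto φ (𝓝[>] 0) (𝓝 z ×ˢ 𝓝[>] 0) := by
    refine Tendsto.prodMk ?_ tendsto_id
    have hcont : Continuous fun s : ℝ => z - s • (z - p) := by fun_prop
    simpa using (hcont.tendsto 0).mono_left nhdsWithin_le_nhds
  have hφ_quot : ∀ᶠ s in 𝓝[>] (0 : ℝ), ‖z - p‖ ≤ clarkeQuot (dK K) (z - p) (φ s) := by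
    filter_upwards [Ioo_mem_nhdsGT one_pos] with s ⟨hs0, hs1⟩
    have hdist : dK K (z - s • (z - p)) ≤ (1 - s) * ‖z - p‖ := by
      calc dK K (z - s • (z - p)) ≤ dist (z - s • (z - p)) p := infDist_le_dist_of_mem hp.1
        _ = (1 - s) * ‖z - p‖ := by
          rw [dist_eq_norm, show z - s • (z - p) - p = (1 - s) • (z - p) by
            rw [sub_smul, one_smul]; abel, norm_smul, Real.norm_of_nonneg (by linarith)]
    have hz : dK K z = ‖z - p‖ := hp.2.symm
    rw [clarkeQuot, le_div_iff₀ hs0, sub_add_cancel, hz]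
    linarith
  exact le_limsup_of_frequently_le (hφ.frequently hφ_quot.frequently)
    (isBoundedUnder_le_of_eventually_abs_le ((lipschitzWith_dK K).eventually_abs_clarkeQuot_le z _))

theorem norm_attaining_functional_in_clarke_subdiff_general
    [NormedAddCommGroup X] [NormedSpace ℝ X] (K : Set X)
    (z p : X) (hz : z ∉ K) (hp : p ∈ nearPts K z) :
    ∃ f : X →L[ℝ] ℝ, ‖f‖ = 1 ∧ f (z - p) = ‖z - p‖ ∧ f ∈ clarkeSubdiff (dK K) z := by
  obtain ⟨f, hf_mem, hf_norm, hf_zp⟩ :=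
    (lipschitzWith_dK K).exists_mem_clarkeSubdiff_apply_eq z (z - p)
  rw [clarkeDeriv_dK_sub_eq_norm_of_mem_nearPts hp] at hf_zp
  have hzp : 0 < ‖z - p‖ := norm_pos_iff.2 (sub_ne_zero.2 fun h => hz (h ▸ hp.1))
  have h_one_le : 1 ≤ ‖f‖ := by
    have h_attain := f.le_opNorm (z - p)
    rw [hf_zp, norm_norm] at h_attain
    exact (le_mul_iff_one_le_left hzp).1 h_attain
  exact ⟨f, le_antisymm (by simpa using hf_norm) h_one_le, hf_zp, hf_mem⟩

theorem norm_attaining_functional_in_clarke_subdiff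
    [NormedAddCommGroup X] [NormedSpace ℝ X] (K : Set X) (hK : K.Nonempty)
    (hcl : IsClosed K) (z p : X) (hz : z ∉ K) (hp : p ∈ nearPts K z) :
    ∃ f : X →L[ℝ] ℝ, ‖f‖ = 1 ∧ f (z - p) = ‖z - p‖ ∧ f ∈ clarkeSubdiff (dK K) z :=
  norm_attaining_functional_in_clarke_subdiff_general K z p hz hp
end
end

section
/- If z ∉ K is a point such that every minimizing sequence in K for z converges to a unique nearest point P_K(z), then the Clarke subdifferential of d_K at z is contained in the subdifferential of the norm at z − P_K(z), i.e. ∂d_K(z) ⊆ {f ∈ X* : ‖f‖ = 1, f(z−P_K(z)) = ‖z−P_K(z)‖}. -/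
open Filter Topology Metric NNReal

noncomputable section

variable {X : Type*}

/-! The Clarke derivative in the direction `p - z` is at most `-‖z - p‖`: for `x` near `z` take
`k ∈ K` almost nearest to `x`; by the minimizing-sequence hypothesis `k` is close to `p`, so
`x - k ≈ z - p`, and moving `x` by `t • (p - z)` shortens `x - k` by about `t * ‖z - p‖`. With the
Lipschitz bound `‖f‖ ≤ 1` this forces `f (z - p) = ‖z - p‖` and `‖f‖ = 1`. -/

section Clarke

variable [NormedAddCommGroup X] [NormedSpace ℝ X] {h : X → ℝ} {L : ℝ≥0}

theorem LipschitzWith.abs_sub_div_le (hh : LipschitzWith L h) (x y : X) {t : ℝ} (ht : 0 < t) :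
    |(h (x + t • y) - h x) / t| ≤ L * ‖y‖ := by
  rw [abs_div, abs_of_pos ht, div_le_iff₀ ht]
  calc |h (x + t • y) - h x| ≤ L * ‖x + t • y - x‖ := by
        simpa [Real.dist_eq, dist_eq_norm] using hh.dist_le_mul (x + t • y) x
    _ = L * ‖y‖ * t := by rw [add_sub_cancel_left, norm_smul, Real.norm_of_nonneg ht.le]; ring

theorem LipschitzWith.clarkeDeriv_le_of_eventually_le (hh : LipschitzWith L h) {x y : X}
    {c : ℝ} (hc : ∀ᶠ q in 𝓝 x ×ˢ 𝓝[>] (0 : ℝ), (h (q.1 + q.2 • y) - h q.1) / q.2 ≤ c) :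
    clarkeDeriv h x y ≤ c := by
  have hpos : ∀ᶠ q : X × ℝ in 𝓝 x ×ˢ 𝓝[>] (0 : ℝ), 0 < q.2 :=
    tendsto_snd.eventually self_mem_nhdsWithin
  refine limsup_le_of_le ?_ hc
  refine IsCoboundedUnder.of_frequently_ge (a := -(L * ‖y‖)) (hpos.mono fun q hq => ?_).frequently
  exact neg_le_of_abs_le (hh.abs_sub_div_le q.1 y hq)

theorem LipschitzWith.norm_le_of_mem_clarkeSubdiff (hh : LipschitzWith L h) {x : X}
    {f : X →L[ℝ] ℝ} (hf : f ∈ clarkeSubdiff h x) : ‖f‖ ≤ L := by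
  refine f.opNorm_le_bound L.2 fun y => abs_le.2 ⟨?_, (hf y).trans (hh.clarkeDeriv_le x y)⟩
  have := (hf (-y)).trans (hh.clarkeDeriv_le x (-y))
  rw [map_neg, norm_neg] at this
  linarith

end Clarke

theorem exists_pos_forall_le_add_imp_dist_lt {α : Type*} [PseudoMetricSpace α] {g : α → ℝ}
    {s : Set α} {m : ℝ} {p : α} (hm : ∀ k ∈ s, m ≤ g k)
    (hmin : ∀ u : ℕ → α, (∀ n, u n ∈ s) → Tendsto (fun n => g (u n)) atTop (𝓝 m) →
      Tendsto u atTop (𝓝 p)) {η : ℝ} (hη : 0 < η) :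
    ∃ ρ > 0, ∀ k ∈ s, g k ≤ m + ρ → dist k p < η := by
  by_contra! hcon
  choose u hus hug hup using fun n : ℕ => hcon (1 / ((n : ℝ) + 1)) Nat.one_div_pos_of_nat
  have hgu : Tendsto (fun n => g (u n)) atTop (𝓝 m) := by
    refine tendsto_of_tendsto_of_tendsto_of_le_of_le tendsto_const_nhds ?_
      (fun n => hm _ (hus n)) hug
    simpa using tendsto_const_nhds.add (tendsto_one_div_add_atTop_nhds_zero_nat (𝕜 := ℝ))
  obtain ⟨N, hN⟩ := Metric.tendsto_atTop.1 (hmin u hus hgu) η hη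
  exact (hup N).not_gt (hN N le_rfl)

section DistanceFunction

variable [NormedAddCommGroup X] [NormedSpace ℝ X]

theorem norm_sub_smul_le {w v : X} {t : ℝ} (ht₀ : 0 ≤ t) (ht₁ : t ≤ 1) :
    ‖w - t • v‖ ≤ ‖w‖ - t * ‖v‖ + 2 * t * ‖w - v‖ := by
  have hv : ‖v‖ ≤ ‖w‖ + ‖w - v‖ := by simpa only [norm_sub_rev] using norm_le_insert' v w
  calc ‖w - t • v‖ = ‖(1 - t) • w + t • (w - v)‖ := by congr 1; module
    _ ≤ (1 - t) * ‖w‖ + t * ‖w - v‖ := by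
        refine (norm_add_le _ _).trans_eq ?_
        rw [norm_smul, norm_smul, Real.norm_of_nonneg (sub_nonneg.2 ht₁), Real.norm_of_nonneg ht₀]
    _ ≤ ‖w‖ - t * ‖v‖ + 2 * t * ‖w - v‖ := by nlinarith

theorem dK_add_smul_sub_le {K : Set X} {x z p k : X} (hk : k ∈ K) {t : ℝ} (ht₀ : 0 ≤ t)
    (ht₁ : t ≤ 1) :
    dK K (x + t • (p - z)) ≤ ‖x - k‖ - t * ‖z - p‖ + 2 * t * (‖x - z‖ + ‖k - p‖) := by
  have hdiff : ‖(x - k) - (z - p)‖ ≤ ‖x - z‖ + ‖k - p‖ := by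
    rw [show (x - k) - (z - p) = (x - z) - (k - p) by abel]
    exact norm_sub_le _ _
  calc dK K (x + t • (p - z)) ≤ ‖(x - k) - t • (z - p)‖ := by
        refine (infDist_le_dist_of_mem hk).trans_eq ?_
        rw [dist_eq_norm]; congr 1; module
    _ ≤ ‖x - k‖ - t * ‖z - p‖ + 2 * t * ‖(x - k) - (z - p)‖ := norm_sub_smul_le ht₀ ht₁
    _ ≤ _ := by gcongr

theorem clarkeDeriv_dK_sub_le {K : Set X} {z p : X} (hp : p ∈ nearPts K z)
    (hnear : ∀ η > 0, ∃ ρ > 0, ∀ k ∈ K, ‖z - k‖ ≤ infDist z K + ρ → dist k p < η) :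
    clarkeDeriv (dK K) z (p - z) ≤ -‖z - p‖ := by
  refine le_of_forall_pos_le_add fun ε hε => ?_
  refine (lipschitzWith_dK K).clarkeDeriv_le_of_eventually_le ?_
  obtain ⟨ρ, hρ, hρnear⟩ := hnear (ε / 8) (by positivity)
  have hball : ball z (min (ρ / 4) (ε / 8)) ∈ 𝓝 z := ball_mem_nhds z (by positivity)
  have hIoo : Set.Ioo 0 (min (ρ / ε) 1) ∈ 𝓝[>] (0 : ℝ) := Ioo_mem_nhdsGT (by positivity)
  filter_upwards [prod_mem_prod hball hIoo] with ⟨x, t⟩ ⟨hx, ht₀, ht⟩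
  simp only [mem_ball, dist_eq_norm, lt_min_iff] at hx ht₀ ht
  obtain ⟨k, hk, hxk⟩ : ∃ k ∈ K, dist x k < dK K x + ε * t / 2 :=
    (infDist_lt_iff ⟨p, hp.1⟩).1 (lt_add_of_pos_right _ (by positivity))
  rw [dist_eq_norm] at hxk
  have hdx : dK K x ≤ infDist z K + ‖x - z‖ := by
    simpa [dK, dist_eq_norm] using infDist_le_infDist_add_dist (x := x) (y := z) (s := K)
  have hεt : ε * t < ρ := (lt_div_iff₀' hε).1 ht.1
  have hzk : ‖z - k‖ ≤ infDist z K + ρ := by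
    have := norm_sub_le_norm_sub_add_norm_sub z x k
    rw [norm_sub_rev z x] at this
    linarith
  have hkp : ‖k - p‖ < ε / 8 := by simpa [dist_eq_norm] using hρnear k hk hzk
  have hstep := dK_add_smul_sub_le (x := x) (z := z) (p := p) hk ht₀.le ht.2.le
  rw [div_le_iff₀ ht₀]
  nlinarith

end DistanceFunction

theorem clarke_subdiff_subset_norm_subdiff_general
    [NormedAddCommGroup X] [NormedSpace ℝ X] (K : Set X)
    (z p : X) (hz : z ∉ K) (hp : p ∈ nearPts K z)
    (hmin : ∀ k : ℕ → X, (∀ n, k n ∈ K) →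
      Tendsto (fun n => ‖z - k n‖) atTop (𝓝 (Metric.infDist z K)) →
      Tendsto k atTop (𝓝 p)) :
    clarkeSubdiff (dK K) z ⊆ normSubdiff (z - p) := by
  intro f hf
  have hnorm_le : ‖f‖ ≤ 1 := by
    simpa using (lipschitzWith_dK K).norm_le_of_mem_clarkeSubdiff hf
  have hnear := fun η (hη : 0 < η) => exists_pos_forall_le_add_imp_dist_lt
    (fun k hk => by simpa [dist_eq_norm] using infDist_le_dist_of_mem (x := z) hk) hmin hη
  have hge : ‖z - p‖ ≤ f (z - p) := by
    have := (hf (p - z)).trans (clarkeDeriv_dK_sub_le hp hnear)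
    rw [← neg_sub, map_neg] at this
    linarith
  have hle : f (z - p) ≤ ‖f‖ * ‖z - p‖ := (le_abs_self _).trans (f.le_opNorm _)
  have hpos : 0 < ‖z - p‖ := norm_pos_iff.2 (sub_ne_zero.2 fun hzp => hz (hzp ▸ hp.1))
  have hnorm_ge : 1 ≤ ‖f‖ := le_of_mul_le_mul_right (by rw [one_mul]; exact hge.trans hle) hpos
  exact ⟨le_antisymm hnorm_le hnorm_ge,
    le_antisymm (hle.trans (mul_le_of_le_one_left (norm_nonneg _) hnorm_le)) hge⟩

theorem clarke_subdiff_subset_norm_subdiff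
    [NormedAddCommGroup X] [NormedSpace ℝ X] (K : Set X) (hK : K.Nonempty)
    (hcl : IsClosed K) (z p : X) (hz : z ∉ K) (hp : p ∈ nearPts K z)
    (hmin : ∀ k : ℕ → X, (∀ n, k n ∈ K) →
      Tendsto (fun n => ‖z - k n‖) atTop (𝓝 (Metric.infDist z K)) →
      Tendsto k atTop (𝓝 p)) :
    clarkeSubdiff (dK K) z ⊆ normSubdiff (z - p) :=
  clarke_subdiff_subset_norm_subdiff_general K z p hz hp hmin
end
end

section
/- If the norm of X is Fréchet differentiable at z − P_K(z) for a point z ∈ E'(K), then the distance function d_K is Fréchet differentiable at z. -/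
open Filter Topology Metric NNReal

noncomputable section

variable {X : Type*}

/-!
The function `x ↦ ‖x - p‖` touches `d_K` from above at `z`, which gives the upper estimate.
For the lower one, pick near-minimizers `q x ∈ K` for `x`; as `x → z` they minimize the distance
to `z`, so `q x → p`. A norming functional `g x` of `z - q x` makes
`d_K z + g x (x - z) - ‖x - z‖²` a minorant of `d_K x`, and by Šmulian's lemma Fréchet
differentiability of the norm at `z - p` forces `g x → ∇‖·‖(z - p)` in norm, closing the squeeze.
-/

open Asymptotics

section NormingFunctionals

variable {E : Type*} [NormedAddCommGroup E] [NormedSpace ℝ E]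

theorem apply_le_norm_of_norm_le_one {g : E →L[ℝ] ℝ} (hg : ‖g‖ ≤ 1) (w : E) : g w ≤ ‖w‖ :=
  (Real.le_norm_self _).trans ((g.le_of_opNorm_le hg w).trans_eq (one_mul _))

theorem sub_apply_le_of_apply_eq_norm {g : E →L[ℝ] ℝ} {v : E} (hg : ‖g‖ ≤ 1)
    (hgv : g v = ‖v‖) (f : E →L[ℝ] ℝ) (v₀ w : E) :
    (g - f) w ≤ ‖v₀ + w‖ - ‖v₀‖ - f w + 2 * ‖v - v₀‖ := by
  have h_add : g (v₀ + w) ≤ ‖v₀ + w‖ := apply_le_norm_of_norm_le_one hg _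
  have h_sub : g (v - v₀) ≤ ‖v - v₀‖ := apply_le_norm_of_norm_le_one hg _
  have h_tri : ‖v₀‖ ≤ ‖v‖ + ‖v - v₀‖ := norm_le_norm_add_norm_sub v v₀
  have h_split : g w = g (v₀ + w) + g (v - v₀) - g v := by
    simp only [map_add, map_sub]; ring
  rw [sub_apply, h_split, hgv]
  linarith

/-- Šmulian's lemma. -/
theorem tendsto_of_hasFDerivAt_norm {f : E →L[ℝ] ℝ} {v₀ : E} (hf : HasFDerivAt (‖·‖) f v₀)
    {ι : Type*} {l : Filter ι} {v : ι → E} {g : ι → E →L[ℝ] ℝ} (hv : Tendsto v l (𝓝 v₀))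
    (hg : ∀ i, ‖g i‖ ≤ 1) (hgv : ∀ i, g i (v i) = ‖v i‖) : Tendsto g l (𝓝 f) := by
  rw [Metric.tendsto_nhds]
  intro ε hε
  obtain ⟨δ, hδ, hrem⟩ : ∃ δ > 0, ∀ w : E, ‖w‖ < δ →
      ‖v₀ + w‖ - ‖v₀‖ - f w ≤ ε / 4 * ‖w‖ := by
    obtain ⟨δ, hδ, h⟩ :=
      Metric.eventually_nhds_iff.mp (hf.isLittleO.def (by positivity : 0 < ε / 4))
    refine ⟨δ, hδ, fun w hw => ?_⟩
    have h_w := h (y := v₀ + w) (by simpa [dist_eq_norm] using hw)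
    simp only [add_sub_cancel_left] at h_w
    exact (Real.le_norm_self _).trans h_w
  filter_upwards [Metric.tendsto_nhds.mp hv (ε * δ / 16) (by positivity)] with i hi
  rw [dist_eq_norm] at hi ⊢
  have h_ball : ∀ w ∈ closedBall (0 : E) (δ / 2), ‖(g i - f) w‖ ≤ ε * δ / 4 := by
    intro w hw
    rw [mem_closedBall_zero_iff] at hw
    have h_εw : ε * ‖w‖ ≤ ε * (δ / 2) := mul_le_mul_of_nonneg_left hw hε.le
    have h_pos := sub_apply_le_of_apply_eq_norm (hg i) (hgv i) f v₀ w
    have h_neg := sub_apply_le_of_apply_eq_norm (hg i) (hgv i) f v₀ (-w)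
    have r_pos := hrem w (by linarith)
    have r_neg := hrem (-w) (by rw [norm_neg]; linarith)
    simp only [map_neg, norm_neg, ← sub_eq_add_neg] at h_neg r_neg
    rw [Real.norm_eq_abs, abs_le]
    constructor <;> linarith
  calc ‖g i - f‖ ≤ ε * δ / 4 / (δ / 2) :=
        (g i - f).opNorm_bound_of_ball_bound (by positivity) _ h_ball
    _ = ε / 2 := by field_simp; ring
    _ < ε := by linarith

theorem hasFDerivAt_of_le_of_tendsto_slope {φ ψ : E → ℝ} {f : E →L[ℝ] ℝ} {z : E}
    {g : E → E →L[ℝ] ℝ} (hψ : HasFDerivAt ψ f z) (hle : ∀ x, φ x ≤ ψ x) (heq : φ z = ψ z)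
    (hg : Tendsto g (𝓝 z) (𝓝 f)) (hlow : ∀ x, φ z + g x (x - z) - ‖x - z‖ ^ 2 ≤ φ x) :
    HasFDerivAt φ f z := by
  refine .of_isLittleO ?_
  have h_bound : ∀ x, ‖φ x - φ z - f (x - z)‖ ≤
      ‖ψ x - ψ z - f (x - z)‖ + ‖g x - f‖ * ‖x - z‖ + ‖x - z‖ ^ 2 := by
    intro x
    have h_slope : |(g x - f) (x - z)| ≤ ‖g x - f‖ * ‖x - z‖ := (g x - f).le_opNorm _
    rw [sub_apply, abs_le] at h_slope
    have h_above := hle x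
    have h_below := hlow x
    have h_nonneg : 0 ≤ ‖g x - f‖ * ‖x - z‖ := by positivity
    rw [Real.norm_eq_abs, Real.norm_eq_abs, abs_le]
    constructor <;> linarith [le_abs_self (ψ x - ψ z - f (x - z)),
      neg_abs_le (ψ x - ψ z - f (x - z)), sq_nonneg ‖x - z‖]
  refine (isBigO_of_le _ fun x => (h_bound x).trans (Real.le_norm_self _)).trans_isLittleO ?_
  have h_sub : Tendsto (fun x => x - z) (𝓝 z) (𝓝 0) := tendsto_sub_nhds_zero_iff.mpr tendsto_id
  have h_slope : (fun x => ‖g x - f‖) =o[𝓝 z] (fun _ => (1 : ℝ)) :=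
    (isLittleO_one_iff ℝ).mpr (by simpa using (hg.sub_const f).norm)
  refine (hψ.isLittleO.norm_left.add ?_).add
    ((isLittleO_norm_pow_id one_lt_two).comp_tendsto h_sub)
  have h_prod := h_slope.mul_isBigO (isBigO_refl (fun x => ‖x - z‖) _)
  simp only [one_mul] at h_prod
  exact isLittleO_norm_right.mp h_prod

end NormingFunctionals

section DistanceFunction

variable [NormedAddCommGroup X]

theorem exists_forall_norm_sub_le_infDist_add {K : Set X} {z p : X} (hp : p ∈ nearPts K z) :
    ∃ q : X → X, ∀ x, q x ∈ K ∧ ‖x - q x‖ ≤ infDist x K + ‖x - z‖ ^ 2 := by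
  have h_near : ∀ x, ∃ q ∈ K, ‖x - q‖ ≤ infDist x K + ‖x - z‖ ^ 2 := by
    intro x
    rcases eq_or_ne x z with rfl | hxz
    · exact ⟨p, hp.1, by simp [hp.2]⟩
    · have h_sq : 0 < ‖x - z‖ ^ 2 := pow_pos (norm_pos_iff.mpr (sub_ne_zero.mpr hxz)) 2
      obtain ⟨q, hq, hlt⟩ := (infDist_lt_iff ⟨p, hp.1⟩).mp (lt_add_of_pos_right _ h_sq)
      exact ⟨q, hq, by rw [← dist_eq_norm]; exact hlt.le⟩
  choose q hqK hq using h_near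
  exact ⟨q, fun x => ⟨hqK x, hq x⟩⟩

theorem tendsto_norm_sub_infDist {K : Set X} {z : X} {q : X → X} (hqK : ∀ x, q x ∈ K)
    (hq : ∀ x, ‖x - q x‖ ≤ infDist x K + ‖x - z‖ ^ 2) :
    Tendsto (fun x => ‖z - q x‖) (𝓝 z) (𝓝 (infDist z K)) := by
  have h_cont : Continuous fun x => infDist x K + ‖x - z‖ ^ 2 + ‖x - z‖ :=
    ((continuous_infDist_pt K).add (by fun_prop)).add (by fun_prop)
  refine tendsto_of_tendsto_of_tendsto_of_le_of_le tendsto_const_nhds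
    (by simpa using h_cont.tendsto z) (fun x => ?_) (fun x => ?_)
  · rw [← dist_eq_norm]
    exact infDist_le_dist_of_mem (hqK x)
  · have h_near := hq x
    linarith [norm_sub_le_norm_sub_add_norm_sub z x (q x), norm_sub_rev z x]

theorem tendsto_of_forall_seq_minimizing {K : Set X} {z p : X}
    (hmin : ∀ k : ℕ → X, (∀ n, k n ∈ K) →
      Tendsto (fun n => ‖z - k n‖) atTop (𝓝 (infDist z K)) → Tendsto k atTop (𝓝 p))
    {α : Type*} {l : Filter α} [l.IsCountablyGenerated] {q : α → X} (hqK : ∀ a, q a ∈ K)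
    (hq : Tendsto (fun a => ‖z - q a‖) l (𝓝 (infDist z K))) : Tendsto q l (𝓝 p) :=
  tendsto_of_seq_tendsto fun _ hx => hmin _ (fun _ => hqK _) (hq.comp hx)

theorem infDist_add_apply_sub_le [NormedSpace ℝ X] {K : Set X} {z q : X} {g : X →L[ℝ] ℝ}
    (hq : q ∈ K) (hg : ‖g‖ ≤ 1) (hgq : g (z - q) = ‖z - q‖) (x : X) :
    infDist z K + g (x - z) ≤ ‖x - q‖ :=
  calc infDist z K + g (x - z) ≤ ‖z - q‖ + g (x - z) := by
        gcongr
        rw [← dist_eq_norm]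
        exact infDist_le_dist_of_mem hq
    _ = g (x - q) := by rw [← hgq, ← map_add, sub_add_sub_cancel']
    _ ≤ ‖x - q‖ := apply_le_norm_of_norm_le_one hg _

end DistanceFunction

theorem distance_function_frechet_diff_of_norm_frechet_general
    [NormedAddCommGroup X] [NormedSpace ℝ X] (K : Set X) (z p : X) (hp : p ∈ nearPts K z)
    (hmin : ∀ k : ℕ → X, (∀ n, k n ∈ K) →
      Tendsto (fun n => ‖z - k n‖) atTop (𝓝 (Metric.infDist z K)) →
      Tendsto k atTop (𝓝 p))
    (hsm : ∃ f₀ : X →L[ℝ] ℝ, HasFDerivAt (fun v : X => ‖v‖) f₀ (z - p)) :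
    DifferentiableAt ℝ (dK K) z := by
  change DifferentiableAt ℝ (fun x => infDist x K) z
  obtain ⟨f₀, hf₀⟩ := hsm
  obtain ⟨q, hq⟩ := exists_forall_norm_sub_le_infDist_add hp
  choose g hg hgq using fun x => exists_dual_vector'' ℝ (z - q x)
  have hq_lim : Tendsto q (𝓝 z) (𝓝 p) := tendsto_of_forall_seq_minimizing hmin
    (fun x => (hq x).1) (tendsto_norm_sub_infDist (fun x => (hq x).1) fun x => (hq x).2)
  have hg_lim : Tendsto g (𝓝 z) (𝓝 f₀) :=
    tendsto_of_hasFDerivAt_norm hf₀ (tendsto_const_nhds.sub hq_lim) hg hgq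
  have hψ : HasFDerivAt (fun x => ‖x - p‖) f₀ z := by
    simpa only [ContinuousLinearMap.comp_id, Function.comp_def] using
      hf₀.comp z (hasFDerivAt_sub_const p)
  refine (hasFDerivAt_of_le_of_tendsto_slope hψ (fun x => ?_) hp.2.symm hg_lim
    fun x => ?_).differentiableAt
  · rw [← dist_eq_norm]
    exact infDist_le_dist_of_mem hp.1
  · linarith [infDist_add_apply_sub_le (hq x).1 (hg x) (hgq x) x, (hq x).2]

theorem distance_function_frechet_diff_of_norm_frechet
    [NormedAddCommGroup X] [NormedSpace ℝ X] (K : Set X) (hK : K.Nonempty)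
    (hcl : IsClosed K) (z p : X) (hz : z ∉ K) (hp : p ∈ nearPts K z)
    (hmin : ∀ k : ℕ → X, (∀ n, k n ∈ K) →
      Tendsto (fun n => ‖z - k n‖) atTop (𝓝 (Metric.infDist z K)) →
      Tendsto k atTop (𝓝 p))
    (hsm : ∃ f₀ : X →L[ℝ] ℝ, HasFDerivAt (fun v : X => ‖v‖) f₀ (z - p)) :
    DifferentiableAt ℝ (dK K) z :=
  distance_function_frechet_diff_of_norm_frechet_general K z p hp hmin hsm
end
end

section
/- If a Lipschitz function h on a normed space is Gâteaux differentiable at every point of a dense set D, uniformly in the point (for each direction y, the difference quotient converges uniformly for x ∈ D), then the map x ↦ h'(x) on D extends to a weak*-continuous map on the whole space whose values lie in the Clarke subdifferential, and consequently for any x and any sequence z_n ∈ D with z_n → x the derivatives h'(z_n) are weak*-convergent. -/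
open Filter Topology Metric NNReal

noncomputable section

variable {X : Type*}

/-!
For a fixed direction `v` and a fixed small step `t`, the difference quotients of the Lipschitz
function `h` at two base points differ by at most `2L‖x - x'‖/t`; combined with the uniform
Gâteaux estimate this makes `x ↦ g x v` uniformly continuous on `D`. Hence `g x v` has a limit
as `x → x₀` within the dense set `D`; these limits are linear in `v` and bounded by `L`, so they
define a functional `G x₀`, continuous in `x₀` for every `v`. Near `x₀`, difference quotients
based in `D` approximate `G x₀ v` uniformly, which puts `G x₀ v` below the Clarke derivative.
-/

open Uniformity in
theorem UniformContinuousOn.exists_tendsto_nhdsWithin {α β : Type*} [UniformSpace α]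
    [UniformSpace β] [CompleteSpace β] {f : α → β} {s : Set α} {x : α}
    (hf : UniformContinuousOn f s) (hx : x ∈ closure s) :
    ∃ y, Tendsto f (𝓝[s] x) (𝓝 y) := by
  have := mem_closure_iff_nhdsWithin_neBot.1 hx
  have hprod : 𝓝[s] x ×ˢ 𝓝[s] x ≤ 𝓤 α ⊓ 𝓟 (s ×ˢ s) := by
    rw [nhdsWithin, ← prod_inf_prod, prod_principal_principal, ← nhds_prod_eq]
    exact inf_le_inf_right _ (nhds_le_uniformity x)
  exact CompleteSpace.complete (cauchy_map_iff.2 ⟨inferInstance, hf.mono_left hprod⟩)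

theorem ContinuousLinearMap.exists_coe_eq_of_tendsto {ι E F : Type*} {l : Filter ι} [l.NeBot]
    [SeminormedAddCommGroup E] [NormedSpace ℝ E] [NormedAddCommGroup F] [NormedSpace ℝ F]
    {T : ι → E →L[ℝ] F} {C : ℝ} (hC : ∀ᶠ i in l, ‖T i‖ ≤ C) {f : E → F}
    (hf : ∀ v, Tendsto (fun i => T i v) l (𝓝 (f v))) :
    ∃ S : E →L[ℝ] F, ⇑S = f := by
  let S : E →ₗ[ℝ] F := linearMapOfTendsto f (fun i => (T i : E →ₗ[ℝ] F)) (tendsto_pi_nhds.2 hf)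
  refine ⟨S.mkContinuous C fun v => le_of_tendsto (hf v).norm ?_, rfl⟩
  filter_upwards [hC] with i hi
  exact (T i).le_of_opNorm_le hi v

def diffQuot [NormedAddCommGroup X] [NormedSpace ℝ X] (h : X → ℝ) (x v : X) (t : ℝ) : ℝ :=
  (h (x + t • v) - h x) / t

section Lipschitz

variable [NormedAddCommGroup X] [NormedSpace ℝ X] {h : X → ℝ} {L : ℝ≥0}

theorem LipschitzWith.abs_diffQuot_le (hLip : LipschitzWith L h) (x v : X) (t : ℝ) :
    |diffQuot h x v t| ≤ L * ‖v‖ := by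
  have hdist := hLip.dist_le_mul (x + t • v) x
  rw [Real.dist_eq, dist_eq_norm, add_sub_cancel_left, norm_smul, Real.norm_eq_abs] at hdist
  rw [diffQuot, abs_div]
  calc |h (x + t • v) - h x| / |t| ≤ L * (|t| * ‖v‖) / |t| := by gcongr
    _ ≤ L * ‖v‖ := by
      rcases eq_or_ne t 0 with rfl | ht
      · simp only [abs_zero, div_zero]; positivity
      · rw [mul_left_comm, mul_div_cancel_left₀ _ (abs_ne_zero.2 ht)]

theorem LipschitzWith.abs_diffQuot_sub_diffQuot_le (hLip : LipschitzWith L h) (x x' v : X)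
    (t : ℝ) : |diffQuot h x v t - diffQuot h x' v t| ≤ 2 * L * ‖x - x'‖ / |t| := by
  have h₁ := hLip.dist_le_mul (x + t • v) (x' + t • v)
  have h₂ := hLip.dist_le_mul x x'
  rw [dist_add_right] at h₁
  rw [Real.dist_eq, dist_eq_norm] at h₁ h₂
  have hsplit : diffQuot h x v t - diffQuot h x' v t
      = ((h (x + t • v) - h (x' + t • v)) - (h x - h x')) / t := by
    simp only [diffQuot]; ring
  rw [hsplit, abs_div]
  gcongr
  linarith [abs_sub (h (x + t • v) - h (x' + t • v)) (h x - h x')]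

end Lipschitz

namespace UniformGateauxOn

variable [NormedAddCommGroup X] [NormedSpace ℝ X] {h : X → ℝ} {g : X → X →L[ℝ] ℝ} {D : Set X}

theorem exists_forall_abs_diffQuot_sub_lt (hunif : UniformGateauxOn h g D) {ε : ℝ}
    (hε : 0 < ε) (v : X) : ∃ δ > 0, ∀ x ∈ D, ∀ t : ℝ, t ≠ 0 → |t| < δ →
      |diffQuot h x v t - g x v| < ε := by
  rcases eq_or_ne v 0 with rfl | hv
  · exact ⟨1, one_pos, fun x _ t _ _ => by simpa [diffQuot] using hε⟩
  have hv' : 0 < ‖v‖ := norm_pos_iff.2 hv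
  obtain ⟨δ, hδ, hδε⟩ := hunif (ε / ‖v‖) (by positivity) (‖v‖⁻¹ • v) (norm_smul_inv_norm hv)
  refine ⟨δ / ‖v‖, by positivity, fun x hx t ht htδ => ?_⟩
  have hrescale : diffQuot h x v t - g x v
      = ‖v‖ * (diffQuot h x (‖v‖⁻¹ • v) (t * ‖v‖) - g x (‖v‖⁻¹ • v)) := by
    rw [diffQuot, diffQuot, smul_smul, mul_assoc, mul_inv_cancel₀ hv'.ne', mul_one, map_smul,
      smul_eq_mul]
    field_simp
  have hstep : |t * ‖v‖| < δ := by
    rwa [abs_mul, abs_norm, ← lt_div_iff₀ hv']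
  calc |diffQuot h x v t - g x v|
      = ‖v‖ * |diffQuot h x (‖v‖⁻¹ • v) (t * ‖v‖) - g x (‖v‖⁻¹ • v)| := by
        rw [hrescale, abs_mul, abs_norm]
    _ < ‖v‖ * (ε / ‖v‖) := by gcongr; exact hδε x hx _ (mul_ne_zero ht hv'.ne') hstep
    _ = ε := mul_div_cancel₀ ε hv'.ne'

variable {L : ℝ≥0}

theorem norm_le (hunif : UniformGateauxOn h g D) (hLip : LipschitzWith L h) {x : X}
    (hx : x ∈ D) : ‖g x‖ ≤ L := by
  refine (g x).opNorm_le_bound L.coe_nonneg fun v => ?_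
  rw [Real.norm_eq_abs]
  refine le_of_forall_pos_lt_add fun ε hε => ?_
  obtain ⟨δ, hδ, hδε⟩ := hunif.exists_forall_abs_diffQuot_sub_lt hε v
  have ht : |δ / 2| < δ := by rw [abs_of_pos (half_pos hδ)]; exact half_lt_self hδ
  calc |g x v| ≤ |diffQuot h x v (δ / 2)| + |diffQuot h x v (δ / 2) - g x v| := by
        simpa only [sub_sub_cancel] using
          abs_sub (diffQuot h x v (δ / 2)) (diffQuot h x v (δ / 2) - g x v)
    _ < L * ‖v‖ + ε :=
      add_lt_add_of_le_of_lt (hLip.abs_diffQuot_le x v _) (hδε x hx _ (half_pos hδ).ne' ht)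

theorem uniformContinuousOn_apply (hunif : UniformGateauxOn h g D) (hLip : LipschitzWith L h)
    (v : X) : UniformContinuousOn (fun x => g x v) D := by
  refine Metric.uniformContinuousOn_iff.2 fun ε hε => ?_
  obtain ⟨δ, hδ, hδε⟩ :=
    hunif.exists_forall_abs_diffQuot_sub_lt (by positivity : 0 < ε / 3) v
  set t := δ / 2
  have ht : 0 < t := half_pos hδ
  have htδ : |t| < δ := by rw [abs_of_pos ht]; exact half_lt_self hδ
  refine ⟨ε * t / (6 * (L + 1)), by positivity, fun x hx x' hx' hxx' => ?_⟩
  rw [dist_eq_norm, lt_div_iff₀ (by positivity)] at hxx'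
  have hbase : 2 * L * ‖x - x'‖ / |t| < ε / 3 := by
    rw [abs_of_pos ht, div_lt_iff₀ ht]
    nlinarith [norm_nonneg (x - x')]
  have h₁ := hδε x hx t ht.ne' htδ
  have h₂ := hδε x' hx' t ht.ne' htδ
  have h₃ := (hLip.abs_diffQuot_sub_diffQuot_le x x' v t).trans_lt hbase
  rw [Real.dist_eq]
  calc |g x v - g x' v|
      ≤ |diffQuot h x v t - g x v| + |diffQuot h x v t - diffQuot h x' v t|
        + |diffQuot h x' v t - g x' v| := by
        linarith [abs_sub_le (g x v) (diffQuot h x v t) (g x' v),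
          abs_sub_le (diffQuot h x v t) (diffQuot h x' v t) (g x' v),
          abs_sub_comm (g x v) (diffQuot h x v t)]
    _ < ε / 3 + ε / 3 + ε / 3 := by gcongr
    _ = ε := by ring

theorem exists_tendsto_apply_nhdsWithin (hunif : UniformGateauxOn h g D)
    (hLip : LipschitzWith L h) {x : X} (hx : x ∈ closure D) :
    ∃ G : X →L[ℝ] ℝ, ∀ v, Tendsto (fun x' => g x' v) (𝓝[D] x) (𝓝 (G v)) := by
  have := mem_closure_iff_nhdsWithin_neBot.1 hx
  choose f hf using fun v => (hunif.uniformContinuousOn_apply hLip v).exists_tendsto_nhdsWithin hx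
  obtain ⟨G, rfl⟩ := ContinuousLinearMap.exists_coe_eq_of_tendsto
    (eventually_nhdsWithin_of_forall fun x' hx' => hunif.norm_le hLip hx') hf
  exact ⟨G, hf⟩

theorem tendsto_diffQuot (hunif : UniformGateauxOn h g D) {x v : X} {a : ℝ}
    (ha : Tendsto (fun x' => g x' v) (𝓝[D] x) (𝓝 a)) :
    Tendsto (fun p : X × ℝ => diffQuot h p.1 v p.2) (𝓝[D] x ×ˢ 𝓝[>] 0) (𝓝 a) := by
  have hsmall : Tendsto (fun p : X × ℝ => diffQuot h p.1 v p.2 - g p.1 v)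
      (𝓝[D] x ×ˢ 𝓝[>] 0) (𝓝 0) := by
    refine Metric.tendsto_nhds.2 fun ε hε => ?_
    obtain ⟨δ, hδ, hδε⟩ := hunif.exists_forall_abs_diffQuot_sub_lt hε v
    filter_upwards [prod_mem_prod self_mem_nhdsWithin (Ioo_mem_nhdsGT hδ)]
      with p ⟨hp, ht, htδ⟩
    rw [Real.dist_eq, sub_zero]
    exact hδε p.1 hp p.2 ht.ne' (by rwa [abs_of_pos ht])
  simpa using hsmall.add (ha.comp tendsto_fst)

theorem le_clarkeDeriv (hunif : UniformGateauxOn h g D) (hLip : LipschitzWith L h) {x v : X}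
    {a : ℝ} (hx : x ∈ closure D) (ha : Tendsto (fun x' => g x' v) (𝓝[D] x) (𝓝 a)) :
    a ≤ clarkeDeriv h x v := by
  have := mem_closure_iff_nhdsWithin_neBot.1 hx
  have hquot := hunif.tendsto_diffQuot ha
  have hbdd : IsBoundedUnder (· ≤ ·) (𝓝 x ×ˢ 𝓝[>] 0)
      (fun p : X × ℝ => diffQuot h p.1 v p.2) :=
    isBoundedUnder_of ⟨L * ‖v‖, fun p => (le_abs_self _).trans (hLip.abs_diffQuot_le _ _ _)⟩
  calc a = limsup (fun p : X × ℝ => diffQuot h p.1 v p.2) (𝓝[D] x ×ˢ 𝓝[>] 0) :=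
        hquot.limsup_eq.symm
    _ ≤ clarkeDeriv h x v :=
        limsup_le_limsup_of_le (prod_mono nhdsWithin_le_nhds le_rfl)
          hquot.isCoboundedUnder_le hbdd

end UniformGateauxOn

theorem uniform_gateaux_extends_weak_star_continuously_general
    [NormedAddCommGroup X] [NormedSpace ℝ X] (h : X → ℝ) (L : ℝ≥0)
    (hLip : LipschitzWith L h) (D : Set X) (hD : Dense D) (g : X → X →L[ℝ] ℝ)
    (hunif : UniformGateauxOn h g D) :
    ∃ G : X → X →L[ℝ] ℝ, (∀ x ∈ D, G x = g x) ∧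
      (∀ y : X, Continuous fun x => G x y) ∧
      (∀ x : X, G x ∈ clarkeSubdiff h x) ∧
      (∀ x : X, ∀ z : ℕ → X, (∀ n, z n ∈ D) → Tendsto z atTop (𝓝 x) →
        ∀ v : X, Tendsto (fun n => g (z n) v) atTop (𝓝 (G x v))) := by
  choose G hG using fun x => hunif.exists_tendsto_apply_nhdsWithin hLip (hD x)
  refine ⟨G, fun x hx => ?_, fun v => ?_, fun x v => hunif.le_clarkeDeriv hLip (hD x) (hG x v),
    fun x z hzD hz v => (hG x v).comp (tendsto_nhdsWithin_iff.2 ⟨hz, .of_forall hzD⟩)⟩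
  · ext v
    exact tendsto_nhds_unique' (mem_closure_iff_nhdsWithin_neBot.1 (hD x)) (hG x v)
      ((hunif.uniformContinuousOn_apply hLip v).continuousOn x hx)
  · have hext : (fun x => G x v) = extendFrom D (fun x' => g x' v) :=
      funext fun x => (extendFrom_eq (hD x) (hG x v)).symm
    rw [hext]
    exact continuous_extendFrom hD fun x => ⟨_, hG x v⟩

theorem uniform_gateaux_extends_weak_star_continuously
    [NormedAddCommGroup X] [NormedSpace ℝ X] (h : X → ℝ) (L : ℝ≥0)
    (hLip : LipschitzWith L h) (D : Set X) (hD : Dense D) (g : X → X →L[ℝ] ℝ)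
    (hderiv : ∀ x ∈ D, HasGDeriv h (g x) x)
    (hunif : UniformGateauxOn h g D) :
    ∃ G : X → X →L[ℝ] ℝ, (∀ x ∈ D, G x = g x) ∧
      (∀ y : X, Continuous fun x => G x y) ∧
      (∀ x : X, G x ∈ clarkeSubdiff h x) ∧
      (∀ x : X, ∀ z : ℕ → X, (∀ n, z n ∈ D) → Tendsto z atTop (𝓝 x) →
        ∀ v : X, Tendsto (fun n => g (z n) v) atTop (𝓝 (G x v))) :=
  uniform_gateaux_extends_weak_star_continuously_general h L hLip D hD g hunif
end
end

section
/- Let X be a normed space with LUR and Fréchet smooth norm, and K nonempty closed and almost proximinal. If for some r > 0 the set E_r(K) is dense in X∖K and d_K is uniformly Fréchet differentiable on this set, then d_K is Fréchet differentiable at every point of X∖K. -/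
open Filter Topology Metric NNReal

noncomputable section

variable {X : Type*}

/-!
Uniform Fréchet differentiability on `D` makes the derivative map uniformly continuous on `D`
when the function is Lipschitz: two derivatives are compared through difference quotients at a
fixed step `t`, and those differ by at most `2 L ‖a - b‖ / |t|`. Hence the derivatives converge
along `𝓝[D] x` for every `x ∈ closure D`, the uniform difference-quotient estimate passes to the
limit, and it yields a Fréchet derivative at `x`. The distance function `d_K` is `1`-Lipschitz,
so this applies with `D = E_r(K)`.
-/

section UniformFrechet

variable [NormedAddCommGroup X] [NormedSpace ℝ X] {h : X → ℝ} {g : X → X →L[ℝ] ℝ} {D : Set X}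

lemma LipschitzWith.abs_diffQuot_sub_diffQuot_le_s12 {L : ℝ≥0} (hh : LipschitzWith L h)
    (a b y : X) (t : ℝ) :
    |(h (a + t • y) - h a) / t - (h (b + t • y) - h b) / t| ≤ 2 * L * ‖a - b‖ / |t| := by
  have hshift := hh.dist_le_mul (a + t • y) (b + t • y)
  have hbase := hh.dist_le_mul a b
  rw [Real.dist_eq, dist_eq_norm, add_sub_add_right_eq_sub] at hshift
  rw [Real.dist_eq, dist_eq_norm] at hbase
  rw [div_sub_div_same, abs_div]
  gcongr
  calc |h (a + t • y) - h a - (h (b + t • y) - h b)|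
      = |(h (a + t • y) - h (b + t • y)) - (h a - h b)| := by ring_nf
    _ ≤ |h (a + t • y) - h (b + t • y)| + |h a - h b| := abs_sub _ _
    _ ≤ 2 * L * ‖a - b‖ := by linarith

lemma UniformFrechetOn.exists_norm_sub_le (hg : UniformFrechetOn h g D) {L : ℝ≥0}
    (hh : LipschitzWith L h) {ε : ℝ} (hε : 0 < ε) :
    ∃ C ≥ (0 : ℝ), ∀ a ∈ D, ∀ b ∈ D, ‖g a - g b‖ ≤ 2 * ε + C * ‖a - b‖ := by
  obtain ⟨δ, hδ, hquot⟩ := hg ε hε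
  set t := δ / 2 with ht_def
  have ht : 0 < t := by positivity
  have htδ : |t| < δ := by rw [abs_of_pos ht]; linarith
  refine ⟨2 * L / t, by positivity, fun a ha b hb => ?_⟩
  refine ContinuousLinearMap.opNorm_le_of_unit_norm (by positivity) fun y hy => ?_
  have hab := hh.abs_diffQuot_sub_diffQuot_le_s12 a b y t
  rw [abs_of_pos ht] at hab
  have hqa := hquot a ha y hy t ht.ne' htδ
  have hqb := hquot b hb y hy t ht.ne' htδ
  rw [sub_apply, Real.norm_eq_abs]
  calc |g a y - g b y|
      = |((h (a + t • y) - h a) / t - (h (b + t • y) - h b) / t)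
          - ((h (a + t • y) - h a) / t - g a y) + ((h (b + t • y) - h b) / t - g b y)| := by
        ring_nf
    _ ≤ |(h (a + t • y) - h a) / t - (h (b + t • y) - h b) / t|
          + |(h (a + t • y) - h a) / t - g a y| + |(h (b + t • y) - h b) / t - g b y| :=
        (abs_add_le _ _).trans (add_le_add_left (abs_sub _ _) _)
    _ ≤ 2 * ε + 2 * L / t * ‖a - b‖ := by
        rw [mul_div_right_comm] at hab
        linarith

lemma UniformFrechetOn.uniformContinuousOn (hg : UniformFrechetOn h g D) {L : ℝ≥0}
    (hh : LipschitzWith L h) : UniformContinuousOn g D := by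
  rw [Metric.uniformContinuousOn_iff]
  intro ε hε
  obtain ⟨C, hC, hbound⟩ := hg.exists_norm_sub_le hh (ε := ε / 4) (by positivity)
  refine ⟨ε / (4 * (C + 1)), by positivity, fun a ha b hb hab => ?_⟩
  rw [dist_eq_norm] at hab ⊢
  have hC' : C * ‖a - b‖ ≤ ε / 4 := by
    calc C * ‖a - b‖ ≤ (C + 1) * (ε / (4 * (C + 1))) := by gcongr; linarith
      _ = ε / 4 := by field_simp
  linarith [hbound a ha b hb]

lemma UniformFrechetOn.exists_tendsto (hg : UniformFrechetOn h g D) {L : ℝ≥0}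
    (hh : LipschitzWith L h) {x : X} (hx : x ∈ closure D) :
    ∃ f, Tendsto g (𝓝[D] x) (𝓝 f) :=
  haveI := mem_closure_iff_nhdsWithin_neBot.mp hx
  CompleteSpace.complete <|
    (cauchy_nhds.mono nhdsWithin_le_nhds).map_of_le (hg.uniformContinuousOn hh) inf_le_right

lemma UniformFrechetOn.singleton_of_tendsto (hg : UniformFrechetOn h g D) (hh : Continuous h)
    {x : X} (hx : x ∈ closure D) {f : X →L[ℝ] ℝ} (hf : Tendsto g (𝓝[D] x) (𝓝 f)) :
    UniformFrechetOn h (fun _ => f) {x} := by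
  have := mem_closure_iff_nhdsWithin_neBot.mp hx
  intro ε hε
  obtain ⟨δ, hδ, hquot⟩ := hg (ε / 2) (by positivity)
  refine ⟨δ, hδ, fun x' hx' y hy t ht htδ => ?_⟩
  rw [Set.mem_singleton_iff.mp hx']
  have hquot_lim : Tendsto (fun z => |(h (z + t • y) - h z) / t - g z y|) (𝓝[D] x)
      (𝓝 |(h (x + t • y) - h x) / t - f y|) := by
    have hcont : Continuous fun z => (h (z + t • y) - h z) / t := by fun_prop
    exact (((hcont.tendsto x).mono_left nhdsWithin_le_nhds).sub
      (((ContinuousLinearMap.apply ℝ ℝ y).continuous.tendsto f).comp hf)).abs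
  have hle := le_of_tendsto hquot_lim
    (eventually_nhdsWithin_of_forall fun z hz => (hquot z hz y hy t ht htδ).le)
  linarith

lemma UniformFrechetOn.hasFDerivAt (hg : UniformFrechetOn h g D) {x : X} (hx : x ∈ D) :
    HasFDerivAt h (g x) x := by
  rw [hasFDerivAt_iff_isLittleO_nhds_zero, Asymptotics.isLittleO_iff]
  intro ε hε
  obtain ⟨δ, hδ, hquot⟩ := hg ε hε
  filter_upwards [Metric.ball_mem_nhds (0 : X) hδ] with w hw
  rw [mem_ball_zero_iff] at hw
  rcases eq_or_ne w 0 with rfl | hw0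
  · simp
  set t := ‖w‖
  have ht : 0 < t := norm_pos_iff.mpr hw0
  have hw_eq : t • (t⁻¹ • w) = w := smul_inv_smul₀ ht.ne' w
  have hunit : ‖t⁻¹ • w‖ = 1 := by rw [norm_smul, norm_inv, norm_norm, inv_mul_cancel₀ ht.ne']
  have hq := hquot x hx _ hunit t ht.ne' (by rwa [abs_of_pos ht])
  rw [hw_eq, map_smul, smul_eq_mul] at hq
  have hsplit : h (x + w) - h x - g x w
      = ((h (x + w) - h x) / t - t⁻¹ * g x w) * t := by
    field_simp
  rw [Real.norm_eq_abs, hsplit, abs_mul, abs_of_pos ht]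
  exact mul_le_mul_of_nonneg_right hq.le ht.le

lemma UniformFrechetOn.differentiableAt_of_mem_closure (hg : UniformFrechetOn h g D)
    {L : ℝ≥0} (hh : LipschitzWith L h) {x : X} (hx : x ∈ closure D) :
    DifferentiableAt ℝ h x := by
  obtain ⟨f, hf⟩ := hg.exists_tendsto hh hx
  exact ((hg.singleton_of_tendsto hh.continuous hx hf).hasFDerivAt
    (Set.mem_singleton x)).differentiableAt

end UniformFrechet

theorem frechet_smooth_of_uniform_frechet_on_Er_general
    [NormedAddCommGroup X] [NormedSpace ℝ X] (K : Set X) (r : ℝ)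
    (hdense : Kᶜ ⊆ closure (Er K r)) (g : X → X →L[ℝ] ℝ)
    (hunif : UniformFrechetOn (dK K) g (Er K r)) :
    ∀ x : X, x ∉ K → DifferentiableAt ℝ (dK K) x := fun _ hx =>
  hunif.differentiableAt_of_mem_closure (Metric.lipschitz_infDist_pt K) (hdense hx)

theorem frechet_smooth_of_uniform_frechet_on_Er
    [NormedAddCommGroup X] [NormedSpace ℝ X] (K : Set X) (hK : K.Nonempty)
    (hcl : IsClosed K) (hLUR : LURNorm X) (hsm : FrechetSmoothNorm X)
    (hap : AlmostProximinal K) (r : ℝ) (hr : 0 < r)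
    (hdense : Kᶜ ⊆ closure (Er K r)) (g : X → X →L[ℝ] ℝ)
    (hgd : ∀ x ∈ Er K r, HasFDerivAt (dK K) (g x) x)
    (hunif : UniformFrechetOn (dK K) g (Er K r)) :
    ∀ x : X, x ∉ K → DifferentiableAt ℝ (dK K) x :=
  frechet_smooth_of_uniform_frechet_on_Er_general K r hdense g hunif
end
end

section
/- If K is a nonempty closed almost sun in a normed linear space X, then for every r > 0 the set E_r(K) = {x₀ − r·(x₀−p(x₀))/‖x₀−p(x₀)‖ : x₀ ∈ E(K), p(x₀) ∈ P_K(x₀), d_K(x₀) > r} is dense in X∖K. -/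
open Filter Topology Metric NNReal

noncomputable section

variable {X : Type*}

section

variable [NormedAddCommGroup X] [NormedSpace ℝ X]

lemma norm_add_smul_sub_sub {z p : X} (hzp : z ≠ p) {t : ℝ} (ht : 0 ≤ t) :
    ‖z + (t / ‖z - p‖) • (z - p) - p‖ = ‖z - p‖ + t := by
  have hd : 0 < ‖z - p‖ := norm_pos_iff.2 (sub_ne_zero.2 hzp)
  rw [show z + (t / ‖z - p‖) • (z - p) - p = (1 + t / ‖z - p‖) • (z - p) by module,
    norm_smul, Real.norm_of_nonneg (by positivity)]
  field_simp

/-- The witness `x₀` is `z` pushed outward by `r` along the ray from `p`; the sun property keeps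
`p` a nearest point of `x₀`, and stepping back by `r` from `x₀` recovers `z`. -/
theorem IsSunAt.mem_Er {K : Set X} {z p : X} (h : IsSunAt K z p) (hzp : z ≠ p) {r : ℝ}
    (hr : 0 ≤ r) : z ∈ Er K r := by
  have hd : 0 < ‖z - p‖ := norm_pos_iff.2 (sub_ne_zero.2 hzp)
  set x₀ := z + (r / ‖z - p‖) • (z - p)
  have hnear : p ∈ nearPts K x₀ := h.2 r hr
  have hdist : ‖x₀ - p‖ = ‖z - p‖ + r := norm_add_smul_sub_sub hzp hr
  refine ⟨x₀, p, hnear, ?_, ?_⟩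
  · rw [← hnear.2, hdist]
    linarith
  · rw [hdist, show x₀ - p = (1 + r / ‖z - p‖) • (z - p) by module, smul_smul,
      show r / (‖z - p‖ + r) * (1 + r / ‖z - p‖) = r / ‖z - p‖ by field_simp]
    module

end

theorem Er_dense_of_almostSun_general
    [NormedAddCommGroup X] [NormedSpace ℝ X] (K : Set X)
    (hsun : AlmostSun K) (r : ℝ) (hr : 0 < r) :
    ∀ x : X, x ∉ K → x ∈ closure (Er K r) := by
  intro x hx
  refine closure_mono ?_ (hsun x hx)
  rintro z ⟨hzK, p, hp⟩
  exact hp.mem_Er (fun hzp => hzK (hzp ▸ hp.1.1)) hr.le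

theorem Er_dense_of_almostSun
    [NormedAddCommGroup X] [NormedSpace ℝ X] (K : Set X) (hK : K.Nonempty)
    (hcl : IsClosed K) (hsun : AlmostSun K) (r : ℝ) (hr : 0 < r) :
    ∀ x : X, x ∉ K → x ∈ closure (Er K r) :=
  Er_dense_of_almostSun_general K hsun r hr
end
end

section
/- If K is a convex set in a normed linear space and x ∉ K has a nearest point p(x) ∈ K, then every point on the ray x + t·(x−p(x))/‖x−p(x)‖, t ≥ 0, also has p(x) as a nearest point; that is, every convex proximinal set is a sun. -/
open Filter Topology Metric NNReal

noncomputable section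

variable {X : Type*}

/-! If `p` is a nearest point of `x` in the convex set `K` and `z = p + s • (x - p)` with `s ≥ 1`,
then for every `q ∈ K` the point `p + s⁻¹ • (q - p)` lies in `K`, and its distance to `x` is
`s⁻¹ • ‖z - q‖`. Comparing with `‖x - p‖ = s⁻¹ • ‖z - p‖` shows that `p` is nearest to `z` too. -/

section NearestPoint

variable [NormedAddCommGroup X] {K : Set X} {x p : X}

theorem mem_nearPts_iff : p ∈ nearPts K x ↔ p ∈ K ∧ ∀ q ∈ K, ‖x - p‖ ≤ ‖x - q‖ := by
  refine ⟨fun ⟨hpK, hpd⟩ => ⟨hpK, fun q hq => ?_⟩, fun ⟨hpK, hmin⟩ => ⟨hpK, ?_⟩⟩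
  · rw [hpd, ← dist_eq_norm]
    exact infDist_le_dist_of_mem hq
  · refine le_antisymm ((le_infDist ⟨p, hpK⟩).2 fun q hq => ?_) ?_
    · rw [dist_eq_norm]
      exact hmin q hq
    · rw [← dist_eq_norm]
      exact infDist_le_dist_of_mem hpK

variable [NormedSpace ℝ X]

theorem Convex.mem_nearPts_homothety (hK : Convex ℝ K) (hp : p ∈ nearPts K x) {s : ℝ}
    (hs : 1 ≤ s) : p ∈ nearPts K (AffineMap.homothety p s x) := by
  obtain ⟨hpK, hmin⟩ := mem_nearPts_iff.1 hp
  have hs₀ : 0 < s := zero_lt_one.trans_le hs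
  refine mem_nearPts_iff.2 ⟨hpK, fun q hq => ?_⟩
  have hmK : p + s⁻¹ • (q - p) ∈ K :=
    hK.add_smul_sub_mem hpK hq ⟨inv_nonneg.2 hs₀.le, inv_le_one_of_one_le₀ hs⟩
  have hzp : AffineMap.homothety p s x - p = s • (x - p) := by
    rw [AffineMap.homothety_apply, vsub_eq_sub, vadd_eq_add, add_sub_cancel_right]
  have hxm : x - (p + s⁻¹ • (q - p)) = s⁻¹ • (AffineMap.homothety p s x - q) := by
    rw [AffineMap.homothety_apply, vsub_eq_sub, vadd_eq_add, smul_sub s⁻¹ (s • (x - p) + p),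
      smul_add, smul_smul, inv_mul_cancel₀ hs₀.ne', one_smul]
    module
  calc ‖AffineMap.homothety p s x - p‖ = s * ‖x - p‖ := by
        rw [hzp, norm_smul, Real.norm_of_nonneg hs₀.le]
    _ ≤ s * ‖x - (p + s⁻¹ • (q - p))‖ := by gcongr; exact hmin _ hmK
    _ = ‖AffineMap.homothety p s x - q‖ := by
        rw [hxm, norm_smul, Real.norm_of_nonneg (inv_nonneg.2 hs₀.le), mul_inv_cancel_left₀ hs₀.ne']

end NearestPoint

theorem convex_proximinal_is_sun_general
    [NormedAddCommGroup X] [NormedSpace ℝ X] (K : Set X) (hconv : Convex ℝ K) (x p : X)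
    (hp : p ∈ nearPts K x) :
    ∀ t : ℝ, 0 ≤ t → p ∈ nearPts K (x + (t / ‖x - p‖) • (x - p)) := by
  intro t ht
  have hray : x + (t / ‖x - p‖) • (x - p) = AffineMap.homothety p (1 + t / ‖x - p‖) x := by
    rw [AffineMap.homothety_apply, vsub_eq_sub, vadd_eq_add]
    module
  rw [hray]
  exact hconv.mem_nearPts_homothety hp (le_add_of_nonneg_right (by positivity))

theorem convex_proximinal_is_sun
    [NormedAddCommGroup X] [NormedSpace ℝ X] (K : Set X) (hK : K.Nonempty)
    (hcl : IsClosed K) (hconv : Convex ℝ K) (x p : X) (hx : x ∉ K)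
    (hp : p ∈ nearPts K x) :
    ∀ t : ℝ, 0 ≤ t → p ∈ nearPts K (x + (t / ‖x - p‖) • (x - p)) :=
  convex_proximinal_is_sun_general K hconv x p hp
end
end

section
/- If the distance function d_K generated by a proximinal set K is Gâteaux differentiable at x ∈ X∖K, then ‖d_K'(x)‖ = 1. -/
/-!
The distance function is `1`-Lipschitz, so every Gâteaux derivative of it has norm at most `1`.
Conversely, if `p` is a nearest point to `x ∉ K`, then `d_K` decreases at unit speed along the
segment from `x` to `p`, so `d_K'(x)` takes the value `-‖p - x‖` at the nonzero vector `p - x`.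
-/

open Filter Topology Metric NNReal

noncomputable section

variable {X : Type*}

section

variable [NormedAddCommGroup X] [NormedSpace ℝ X]

theorem HasGDeriv.norm_le_of_lipschitzWith {h : X → ℝ} {f : X →L[ℝ] ℝ} {x : X} {C : ℝ≥0}
    (hh : LipschitzWith C h) (hf : HasGDeriv h f x) : ‖f‖ ≤ C := by
  refine f.opNorm_le_bound C.coe_nonneg fun y => le_of_tendsto (hf y).norm ?_
  filter_upwards [self_mem_nhdsWithin] with t (ht : t ≠ 0)
  rw [norm_div, div_le_iff₀ (norm_pos_iff.2 ht)]
  calc ‖h (x + t • y) - h x‖ = dist (h (x + t • y)) (h x) := (dist_eq_norm _ _).symm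
    _ ≤ C * dist (x + t • y) x := hh.dist_le_mul _ _
    _ = C * ‖y‖ * ‖t‖ := by rw [dist_eq_norm, add_sub_cancel_left, norm_smul]; ring

theorem HasGDeriv.apply_eq_of_eventually_nhdsGT {h : X → ℝ} {f : X →L[ℝ] ℝ} {x y : X} {c : ℝ}
    (hf : HasGDeriv h f x) (hc : ∀ᶠ t in 𝓝[>] 0, (h (x + t • y) - h x) / t = c) : f y = c :=
  tendsto_nhds_unique ((hf y).mono_left (nhdsGT_le_nhdsNE 0))
    (tendsto_const_nhds.congr' (hc.mono fun _ => Eq.symm))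

theorem infDist_add_smul_sub_of_mem_nearPts {K : Set X} {x p : X} (hp : p ∈ nearPts K x)
    {s : ℝ} (hs₀ : 0 ≤ s) (hs₁ : s ≤ 1) :
    infDist (x + s • (p - x)) K = (1 - s) * infDist x K := by
  obtain ⟨hpK, hpd⟩ := hp
  have hdist : dist x (x + s • (p - x)) = s * infDist x K := by
    rw [dist_eq_norm, sub_add_cancel_left, norm_neg, norm_smul, Real.norm_of_nonneg hs₀,
      norm_sub_rev, hpd]
  refine le_antisymm ?_ ?_
  · calc infDist (x + s • (p - x)) K ≤ dist (x + s • (p - x)) p := infDist_le_dist_of_mem hpK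
      _ = (1 - s) * infDist x K := by
        rw [dist_eq_norm, ← hpd, ← Real.norm_of_nonneg (sub_nonneg.2 hs₁), ← norm_smul]
        congr 1
        module
  · linarith [infDist_le_infDist_add_dist (s := K) (x := x) (y := x + s • (p - x))]

end

theorem norm_gateaux_deriv_distance_eq_one_general
    [NormedAddCommGroup X] [NormedSpace ℝ X] (K : Set X)
    (hprox : Proximinal K) (x : X) (hx : x ∉ K)
    (f : X →L[ℝ] ℝ) (hf : HasGDeriv (dK K) f x) : ‖f‖ = 1 := by
  obtain ⟨p, hp⟩ := hprox x hx
  have hpx : 0 < ‖p - x‖ := norm_pos_iff.2 (sub_ne_zero.2 (ne_of_mem_of_not_mem hp.1 hx))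
  have hfp : f (p - x) = -‖p - x‖ := by
    refine hf.apply_eq_of_eventually_nhdsGT ?_
    filter_upwards [Ioc_mem_nhdsGT one_pos] with t ⟨ht₀, ht₁⟩
    unfold dK
    rw [infDist_add_smul_sub_of_mem_nearPts hp ht₀.le ht₁, norm_sub_rev, hp.2]
    field_simp
    ring
  refine le_antisymm (by simpa using hf.norm_le_of_lipschitzWith (lipschitz_infDist_pt K)) ?_
  have hle := f.le_opNorm (p - x)
  rw [hfp, norm_neg, norm_norm] at hle
  exact le_of_mul_le_mul_right (by rwa [one_mul]) hpx

theorem norm_gateaux_deriv_distance_eq_one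
    [NormedAddCommGroup X] [NormedSpace ℝ X] (K : Set X) (hK : K.Nonempty)
    (hcl : IsClosed K) (hprox : Proximinal K) (x : X) (hx : x ∉ K)
    (f : X →L[ℝ] ℝ) (hf : HasGDeriv (dK K) f x) : ‖f‖ = 1 :=
  norm_gateaux_deriv_distance_eq_one_general K hprox x hx f hf
end
end

section
/- Let X be a normed space with uniformly Gâteaux smooth and rotund (strictly convex) norm, and let K be a nonempty closed almost sun. Then every point x ∈ X∖K that has a nearest point in K has a unique nearest point in K; consequently K is Chebyshev if and only if K is proximinal. -/
/-!
At a sun point `z` with nearest point `p'`, let `f` be the Gâteaux derivative of the norm at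
`z - p'`. Moving `z` away from `p'` along the ray keeps `p'` nearest, which says that `‖·‖`
does not decrease from `z - p'` in any direction `p' - w` with `w ∈ K`; hence
`d(z, K) = f (z - p') ≤ f (z - w)`. Adding this for `w = p, q` and using `f ≤ ‖·‖` gives
`2 d(z, K) ≤ ‖(z - p) + (z - q)‖`, a closed condition in `z`, so density of sun points
extends it to every `x ∉ K`. For two nearest points `p, q` of `x` this is equality in the triangle
inequality, and strict convexity forces `p = q`.
-/
open Filter Topology Metric NNReal

noncomputable section

variable {X : Type*}

lemma tendsto_const_mul_nhdsNE {c : ℝ} (hc : c ≠ 0) :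
    Tendsto (fun t : ℝ => c * t) (𝓝[≠] 0) (𝓝[≠] 0) := by
  refine tendsto_nhdsWithin_iff.2
    ⟨?_, eventually_nhdsWithin_of_forall fun t ht => mul_ne_zero hc ht⟩
  simpa using tendsto_nhdsWithin_of_tendsto_nhds ((continuous_const_mul c).tendsto 0)

section GateauxDerivative

variable [NormedAddCommGroup X] [NormedSpace ℝ X] {h : X → ℝ} {f : X →L[ℝ] ℝ} {x : X}

lemma hasGDeriv_of_forall_norm_eq_one
    (H : ∀ y : X, ‖y‖ = 1 →
      Tendsto (fun t : ℝ => (h (x + t • y) - h x) / t) (𝓝[≠] 0) (𝓝 (f y))) :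
    HasGDeriv h f x := by
  intro v
  rcases eq_or_ne v 0 with rfl | hv
  · simp
  have hnv : ‖v‖ ≠ 0 := norm_ne_zero_iff.2 hv
  have hy : ‖‖v‖⁻¹ • v‖ = 1 := norm_smul_inv_norm hv
  have hlim := ((H _ hy).comp (tendsto_const_mul_nhdsNE hnv)).const_mul ‖v‖
  rw [map_smul, smul_eq_mul, mul_inv_cancel_left₀ hnv] at hlim
  refine hlim.congr' (eventually_nhdsWithin_of_forall fun t ht => ?_)
  simp only [Function.comp_apply, smul_smul, mul_assoc]
  field_simp

lemma UniformGateauxOn.hasGDeriv {g : X → X →L[ℝ] ℝ} {D : Set X}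
    (hg : UniformGateauxOn h g D) (hx : x ∈ D) : HasGDeriv h (g x) x := by
  refine hasGDeriv_of_forall_norm_eq_one fun y hy =>
    Metric.tendsto_nhdsWithin_nhds.2 fun ε hε => ?_
  obtain ⟨δ, hδ, H⟩ := hg ε hε y hy
  refine ⟨δ, hδ, fun t ht htδ => ?_⟩
  rw [Real.dist_eq, sub_zero] at htδ
  exact H x hx t ht htδ

lemma HasGDeriv.apply_nonneg_of_eventually_le {v : X} (hf : HasGDeriv h f x)
    (hmin : ∀ᶠ s in 𝓝[>] (0 : ℝ), h x ≤ h (x + s • v)) : 0 ≤ f v := by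
  refine ge_of_tendsto ((hf v).mono_left (nhdsGT_le_nhdsNE 0)) ?_
  filter_upwards [hmin, self_mem_nhdsWithin] with s hs hpos
  exact div_nonneg (sub_nonneg.2 hs) (le_of_lt hpos)

end GateauxDerivative

section NormDerivative

variable [NormedAddCommGroup X] [NormedSpace ℝ X] {f : X →L[ℝ] ℝ} {x : X}

lemma HasGDeriv.norm_apply_le (hf : HasGDeriv (‖·‖) f x) (v : X) : f v ≤ ‖v‖ := by
  refine le_of_tendsto ((hf v).mono_left (nhdsGT_le_nhdsNE 0)) ?_
  filter_upwards [self_mem_nhdsWithin] with s (hs : 0 < s)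
  rw [div_le_iff₀ hs]
  calc ‖x + s • v‖ - ‖x‖ ≤ ‖s • v‖ := by linarith [norm_add_le x (s • v)]
    _ = ‖v‖ * s := by rw [norm_smul, Real.norm_of_nonneg hs.le, mul_comm]

lemma HasGDeriv.norm_apply_self (hf : HasGDeriv (‖·‖) f x) : f x = ‖x‖ := by
  refine tendsto_nhds_unique ((hf x).mono_left (nhdsGT_le_nhdsNE 0)) ?_
  refine tendsto_const_nhds.congr' (eventually_nhdsWithin_of_forall fun s (hs : 0 < s) => ?_)
  have : x + s • x = (1 + s) • x := by rw [add_smul, one_smul]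
  simp only [this, norm_smul, Real.norm_of_nonneg (by linarith : (0 : ℝ) ≤ 1 + s)]
  field_simp
  ring

lemma HasGDeriv.norm_smul_of_pos (hf : HasGDeriv (‖·‖) f x) {c : ℝ} (hc : 0 < c) :
    HasGDeriv (‖·‖) f (c • x) := by
  intro v
  refine ((hf v).comp (tendsto_const_mul_nhdsNE (inv_ne_zero hc.ne'))).congr'
    (eventually_nhdsWithin_of_forall fun t ht => ?_)
  have : c • x + t • v = c • (x + (c⁻¹ * t) • v) := by
    rw [smul_add, smul_smul, mul_inv_cancel_left₀ hc.ne']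
  simp only [Function.comp_apply, this, norm_smul, Real.norm_of_nonneg hc.le]
  field_simp

end NormDerivative

lemma UniformGateauxSmoothNorm.gateauxSmoothNorm [NormedAddCommGroup X] [NormedSpace ℝ X]
    (hX : UniformGateauxSmoothNorm X) : GateauxSmoothNorm X := by
  obtain ⟨g, hg⟩ := hX
  intro x hx
  have hu : ‖‖x‖⁻¹ • x‖ = 1 := norm_smul_inv_norm hx
  refine ⟨g (‖x‖⁻¹ • x), ?_⟩
  simpa [smul_inv_smul₀ (norm_ne_zero_iff.2 hx)] using
    (hg.hasGDeriv hu).norm_smul_of_pos (norm_pos_iff.2 hx)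

section Sun

variable [NormedAddCommGroup X] [NormedSpace ℝ X] {K : Set X} {x z p q w : X}

lemma IsSunAt.norm_le_norm_add_smul (hs : IsSunAt K z p) (hw : w ∈ K) {s : ℝ} (hs0 : 0 < s)
    (hs1 : s ≤ 1) : ‖z - p‖ ≤ ‖(z - p) + s • (p - w)‖ := by
  rcases eq_or_ne ‖z - p‖ 0 with hd | hd
  · exact hd ▸ norm_nonneg _
  have hsun := hs.2 (‖z - p‖ * (s⁻¹ - 1))
    (mul_nonneg (norm_nonneg _) (sub_nonneg.2 ((one_le_inv₀ hs0).2 hs1)))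
  rw [mul_div_cancel_left₀ _ hd] at hsun
  set y := z + (s⁻¹ - 1) • (z - p) with hy
  have hyp : y - p = s⁻¹ • (z - p) := by rw [hy, sub_smul, one_smul]; abel
  have hyw : y - w = s⁻¹ • ((z - p) + s • (p - w)) := by
    rw [hy, smul_add, smul_smul, inv_mul_cancel₀ hs0.ne', one_smul, sub_smul, one_smul]; abel
  have hnear : ‖y - p‖ ≤ ‖y - w‖ :=
    hsun.2 ▸ (infDist_le_dist_of_mem hw).trans_eq (dist_eq_norm _ _)
  rw [hyp, hyw, norm_smul, norm_smul] at hnear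
  exact le_of_mul_le_mul_left hnear (norm_pos_iff.2 (inv_ne_zero hs0.ne'))

lemma IsSunAt.infDist_le_apply {f : X →L[ℝ] ℝ} (hs : IsSunAt K z p)
    (hf : HasGDeriv (‖·‖) f (z - p)) (hw : w ∈ K) : infDist z K ≤ f (z - w) := by
  have hpw : 0 ≤ f (p - w) := hf.apply_nonneg_of_eventually_le <| by
    filter_upwards [Ioc_mem_nhdsGT zero_lt_one] with s hs'
    exact hs.norm_le_norm_add_smul hw hs'.1 hs'.2
  calc infDist z K = ‖z - p‖ := hs.1.2.symm
    _ = f (z - p) := hf.norm_apply_self.symm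
    _ ≤ f (z - p) + f (p - w) := le_add_of_nonneg_right hpw
    _ = f (z - w) := by rw [← map_add, sub_add_sub_cancel]

lemma AlmostSun.two_mul_infDist_le (hX : GateauxSmoothNorm X) (hK : AlmostSun K) (hx : x ∉ K)
    (hp : p ∈ K) (hq : q ∈ K) : 2 * infDist x K ≤ ‖(x - p) + (x - q)‖ := by
  have hclosed : IsClosed {z : X | 2 * infDist z K ≤ ‖(z - p) + (z - q)‖} :=
    isClosed_le (continuous_const.mul (continuous_infDist_pt K)) (by fun_prop)
  refine hclosed.closure_subset_iff.2 ?_ (hK x hx)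
  rintro z ⟨hzK, p', hs⟩
  obtain ⟨f, hf⟩ := hX (z - p') (sub_ne_zero.2 fun h => hzK (h ▸ hs.1.1))
  have hfp := hs.infDist_le_apply hf hp
  have hfq := hs.infDist_le_apply hf hq
  have hle := hf.norm_apply_le ((z - p) + (z - q))
  rw [map_add] at hle
  show 2 * infDist z K ≤ _
  linarith

lemma AlmostSun.nearPts_subsingleton [StrictConvexSpace ℝ X] (hX : GateauxSmoothNorm X)
    (hK : AlmostSun K) (hx : x ∉ K) : (nearPts K x).Subsingleton := by
  rintro p ⟨hpK, hpd⟩ q ⟨hqK, hqd⟩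
  have hsum := hK.two_mul_infDist_le hX hx hpK hqK
  have hadd : ‖(x - p) + (x - q)‖ = ‖x - p‖ + ‖x - q‖ :=
    le_antisymm (norm_add_le _ _) (by rw [hpd, hqd]; linarith)
  exact sub_right_injective (eq_of_norm_eq_of_norm_add_eq (hpd.trans hqd.symm) hadd)

end Sun

theorem almostSun_chebyshev_iff_proximinal_general
    [NormedAddCommGroup X] [NormedSpace ℝ X] [StrictConvexSpace ℝ X]
    (husm : UniformGateauxSmoothNorm X) (K : Set X)
    (hsun : AlmostSun K) :
    (∀ x : X, x ∉ K → (nearPts K x).Nonempty → ∃! p, p ∈ nearPts K x) ∧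
      (Chebyshev K ↔ Proximinal K) := by
  have huniq : ∀ x : X, x ∉ K → (nearPts K x).Nonempty → ∃! p, p ∈ nearPts K x :=
    fun x hx ⟨p, hp⟩ =>
      ⟨p, hp, fun q hq => hsun.nearPts_subsingleton husm.gateauxSmoothNorm hx hq hp⟩
  exact ⟨huniq, fun h x hx => (h x hx).exists, fun h x hx => huniq x hx (h x hx)⟩

theorem almostSun_chebyshev_iff_proximinal
    [NormedAddCommGroup X] [NormedSpace ℝ X] [StrictConvexSpace ℝ X]
    (husm : UniformGateauxSmoothNorm X) (K : Set X) (hK : K.Nonempty)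
    (hcl : IsClosed K) (hsun : AlmostSun K) :
    (∀ x : X, x ∉ K → (nearPts K x).Nonempty → ∃! p, p ∈ nearPts K x) ∧
      (Chebyshev K ↔ Proximinal K) :=
  almostSun_chebyshev_iff_proximinal_general husm K hsun
end
end

section
/- In a Hilbert space, every Chebyshev set that is an almost sun is convex. -/
open Filter Topology Metric NNReal

noncomputable section

variable {X : Type*}

/-!
If `p` is the nearest point of `z` in `K` and stays nearest along the whole ray from `p`
through `z`, then letting the ray run to infinity shows that `K` lies in the half-space
`{y | ⟪z - p, y - p⟫ ≤ 0}`; hence so does `convexHull K`, and every point of `convexHull K`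
is at least as far from `z` as `p` is. A point `m` of `convexHull K` outside `K` is
approximated by such sun points `z`, whose nearest points `p` then lie within
`2 ‖z - m‖` of `m`, so `m ∈ closure K = K`.
-/

open scoped InnerProductSpace

theorem nonpos_of_forall_nonneg_mul_le {𝕜 : Type*} [Field 𝕜] [LinearOrder 𝕜]
    [IsStrictOrderedRing 𝕜] {a b : 𝕜} (h : ∀ c : 𝕜, 0 ≤ c → c * a ≤ b) : a ≤ 0 := by
  by_contra! ha
  have := h ((|b| + 1) / a) (by positivity)
  rw [div_mul_cancel₀ _ ha.ne'] at this
  linarith [le_abs_self b]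

section

variable {E : Type*} [NormedAddCommGroup E] [InnerProductSpace ℝ E] {K : Set E} {z p : E}

theorem IsSunAt.inner_le (h : IsSunAt K z p) {k : E} (hk : k ∈ K) :
    ⟪z - p, k⟫_ℝ ≤ ⟪z - p, p⟫_ℝ := by
  rcases eq_or_ne z p with rfl | hzp
  · simp
  have hr : ‖z - p‖ ≠ 0 := norm_ne_zero_iff.mpr (sub_ne_zero.mpr hzp)
  rw [← sub_nonpos, ← inner_sub_right]
  refine nonpos_of_forall_nonneg_mul_le (b := ‖k - p‖ ^ 2 / 2 - ⟪z - p, k - p⟫_ℝ)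
    fun c hc => ?_
  have hnear : ‖(1 + c) • (z - p)‖ ≤ ‖(1 + c) • (z - p) - (k - p)‖ := by
    have hp := (h.2 (c * ‖z - p‖) (by positivity)).2
    rw [mul_div_cancel_right₀ _ hr] at hp
    have e1 : z + c • (z - p) - p = (1 + c) • (z - p) := by module
    have e2 : z + c • (z - p) - k = (1 + c) • (z - p) - (k - p) := by module
    calc ‖(1 + c) • (z - p)‖ = infDist (z + c • (z - p)) K := e1 ▸ hp
      _ ≤ dist (z + c • (z - p)) k := infDist_le_dist_of_mem hk
      _ = _ := by rw [dist_eq_norm, e2]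
  have hsq := pow_le_pow_left₀ (norm_nonneg _) hnear 2
  rw [norm_sub_sq_real, real_inner_smul_left] at hsq
  nlinarith

theorem IsSunAt.convexHull_subset (h : IsSunAt K z p) :
    convexHull ℝ K ⊆ {y | ⟪z - p, y⟫_ℝ ≤ ⟪z - p, p⟫_ℝ} :=
  convexHull_min (fun _ hk => h.inner_le hk)
    (convex_halfSpace_le (innerₛₗ ℝ (z - p)).isLinear _)

theorem IsSunAt.norm_sub_le_of_mem_convexHull (h : IsSunAt K z p) {y : E}
    (hy : y ∈ convexHull ℝ K) : ‖z - p‖ ≤ ‖z - y‖ := by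
  have hyp : ⟪z - p, y - p⟫_ℝ ≤ 0 := by
    rw [inner_sub_right, sub_nonpos]
    exact h.convexHull_subset hy
  have hsq : ‖z - y‖ ^ 2 = ‖z - p‖ ^ 2 - 2 * ⟪z - p, y - p⟫_ℝ + ‖y - p‖ ^ 2 := by
    rw [← norm_sub_sq_real, sub_sub_sub_cancel_right]
  refine pow_le_pow_iff_left₀ (norm_nonneg _) (norm_nonneg _) two_ne_zero |>.mp ?_
  nlinarith [sq_nonneg ‖y - p‖]

theorem AlmostSun.convexHull_subset_closure (hsun : AlmostSun K) :
    convexHull ℝ K ⊆ closure K := by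
  intro m hm
  by_cases hmK : m ∈ K
  · exact subset_closure hmK
  refine Metric.mem_closure_iff.mpr fun ε hε => ?_
  obtain ⟨z, ⟨-, p, hz⟩, hmz⟩ := Metric.mem_closure_iff.mp (hsun m hmK) (ε / 2) (half_pos hε)
  refine ⟨p, hz.1.1, ?_⟩
  have hzp : dist z p ≤ dist m z := by
    rw [dist_eq_norm, dist_comm, dist_eq_norm]
    exact hz.norm_sub_le_of_mem_convexHull hm
  linarith [dist_triangle m z p]

end

theorem chebyshev_almostSun_convex_hilbert_general
    {H : Type*} [NormedAddCommGroup H] [InnerProductSpace ℝ H]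
    (K : Set H) (hcl : IsClosed K)
    (hsun : AlmostSun K) : Convex ℝ K := by
  rw [← convexHull_eq_self]
  exact (hsun.convexHull_subset_closure.trans hcl.closure_subset).antisymm
    (subset_convexHull ℝ K)

theorem chebyshev_almostSun_convex_hilbert
    {H : Type*} [NormedAddCommGroup H] [InnerProductSpace ℝ H] [CompleteSpace H]
    (K : Set H) (hK : K.Nonempty) (hcl : IsClosed K) (hcheb : Chebyshev K)
    (hsun : AlmostSun K) : Convex ℝ K :=
  chebyshev_almostSun_convex_hilbert_general K hcl hsun
end
end
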